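/- arXiv:1503.06665 — 12 statements merged into one kernel-verified Lean document; each statement's English description precedes it below -/
import Mathlib

section
/- For any valuation vectors a, b and any allocation w, the allocation w is NOT Pareto optimal if and only if there exist items i and j such that w_j > 0 (Alice receives a non-zero fraction of j), w_i < 1 (Bob receives a non-zero fraction of i), and a_i · b_j > a_j · b_i. -/
open Finset

/-- A valuation vector: positive entries summing to 1. -/
def IsValuation {m : ℕ} (v : Fin m → ℝ) : Prop :=
  (∀ i, 0 < v i) ∧ ∑ i, v i = 1

/-- An allocation: Alice receives fraction `w i ∈ [0,1]` of item `i`. -/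
def IsAlloc {m : ℕ} (w : Fin m → ℝ) : Prop :=
  ∀ i, 0 ≤ w i ∧ w i ≤ 1

/-- Alice's utility. -/
def uA {m : ℕ} (a w : Fin m → ℝ) : ℝ := ∑ i, a i * w i

/-- Bob's utility. -/
def uB {m : ℕ} (b w : Fin m → ℝ) : ℝ := ∑ i, b i * (1 - w i)

/-- Pareto optimality with respect to true valuations `(a, b)`. -/
def ParetoOptimal {m : ℕ} (a b w : Fin m → ℝ) : Prop :=
  ¬ ∃ w' : Fin m → ℝ, IsAlloc w' ∧ uA a w ≤ uA a w' ∧ uB b w ≤ uB b w' ∧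
      (uA a w < uA a w' ∨ uB b w < uB b w')

/-- Equitable allocation: both players obtain equal utility. -/
def Equitable {m : ℕ} (a b w : Fin m → ℝ) : Prop := uA a w = uB b w

/-- At most one item is split. -/
def MinimallyFractional {m : ℕ} (w : Fin m → ℝ) : Prop :=
  ∃ i₀ : Fin m, ∀ i, i ≠ i₀ → w i = 0 ∨ w i = 1

/-- Ordered allocation with respect to `(a, b)`: items sorted by decreasing ratio
`a i / b i` (cross-multiplied) and a boundary line at item `l` split in fraction `λ`. -/
def Ordered {m : ℕ} (a b w : Fin m → ℝ) : Prop :=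
  ∃ π : Equiv.Perm (Fin m),
    (∀ i j : Fin m, i < j → a (π j) * b (π i) ≤ a (π i) * b (π j)) ∧
    ∃ l : Fin m, ∃ lam : ℝ, 0 ≤ lam ∧ lam ≤ 1 ∧
      (∀ i, i < l → w (π i) = 1) ∧ w (π l) = lam ∧ (∀ i, l < i → w (π i) = 0)

/-- Envy-freeness with respect to `(a, b)`. -/
def EnvyFree {m : ℕ} (a b w : Fin m → ℝ) : Prop :=
  (∑ i, a i * (1 - w i)) ≤ (∑ i, a i * w i) ∧ (∑ i, b i * w i) ≤ (∑ i, b i * (1 - w i))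

/-- Maxmin allocation: maximizes the minimum utility over the two players. -/
def Maxmin {m : ℕ} (a b w : Fin m → ℝ) : Prop :=
  ∀ w' : Fin m → ℝ, IsAlloc w' → min (uA a w') (uB b w') ≤ min (uA a w) (uB b w)

/-- an allocation `w` is not Pareto optimal iff there are items `i, j`
with `w j > 0` (Alice gets part of `j`), `w i < 1` (Bob gets part of `i`), and
`a i * b j > a j * b i`. -/
theorem not_paretoOptimal_iff (m : ℕ) (hm : 1 ≤ m) (a b w : Fin m → ℝ)
    (ha : IsValuation a) (hb : IsValuation b) (hw : IsAlloc w) :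
    ¬ ParetoOptimal a b w ↔
      ∃ i j : Fin m, 0 < w j ∧ w i < 1 ∧ a j * b i < a i * b j := by
  constructor
  · -- forward: not Pareto optimal implies existence of improving pair
    intro hnpo
    by_contra hcon
    push_neg at hcon
    -- hcon : ∀ i j, 0 < w j → w i < 1 → a i * b j ≤ a j * b i
    apply hnpo
    -- find a threshold t
    obtain ⟨t, ht, h1, h2⟩ : ∃ t : ℝ, 0 < t ∧ (∀ i, w i < 1 → a i ≤ t * b i) ∧
        (∀ i, 0 < w i → t * b i ≤ a i) := by
      by_cases hT : ∃ i, w i < 1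
      · obtain ⟨i₁, hi₁⟩ := hT
        obtain ⟨i₀, hi₀T, hi₀max⟩ := Finset.exists_max_image
          ((univ : Finset (Fin m)).filter fun i => w i < 1) (fun i => a i / b i)
          ⟨i₁, by simpa using hi₁⟩
        have hwi₀ : w i₀ < 1 := by simpa using hi₀T
        refine ⟨a i₀ / b i₀, div_pos (ha.1 i₀) (hb.1 i₀), ?_, ?_⟩
        · intro i hi
          have := hi₀max i (by simpa using hi)
          rw [div_le_div_iff₀ (hb.1 i) (hb.1 i₀)] at this
          rw [div_mul_eq_mul_div, le_div_iff₀ (hb.1 i₀)]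
          nlinarith
        · intro i hi
          have := hcon i₀ i hi hwi₀
          rw [div_mul_eq_mul_div, div_le_iff₀ (hb.1 i₀)]
          nlinarith
      · push_neg at hT
        obtain ⟨i₀, _, hi₀min⟩ := Finset.exists_min_image (univ : Finset (Fin m))
          (fun i => a i / b i) ⟨⟨0, hm⟩, mem_univ _⟩
        refine ⟨a i₀ / b i₀, div_pos (ha.1 i₀) (hb.1 i₀), ?_, ?_⟩
        · intro i hi
          exact absurd hi (not_lt.2 (hT i))
        · intro i _
          have := hi₀min i (mem_univ i)
          rw [div_le_div_iff₀ (hb.1 i₀) (hb.1 i)] at this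
          rw [div_mul_eq_mul_div, div_le_iff₀ (hb.1 i₀)]
          nlinarith
    rintro ⟨w', hw', hA, hB, hst⟩
    have key : ∀ k ∈ (univ : Finset (Fin m)),
        a k * w' k - a k * w k ≤ t * (b k * w' k - b k * w k) := by
      intro k _
      rcases le_or_gt (w k) (w' k) with hk | hk
      · rcases lt_or_ge (w k) 1 with hk1 | hk1
        · have := h1 k hk1
          nlinarith [hb.1 k]
        · have : w' k = w k := le_antisymm (le_trans (hw' k).2 hk1) hk
          rw [this]; simp
      · have hk0 : 0 < w k := lt_of_le_of_lt (hw' k).1 hk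
        have := h2 k hk0
        nlinarith [hb.1 k]
    have hAe : uA a w' - uA a w = ∑ k, (a k * w' k - a k * w k) := by
      simp [uA, Finset.sum_sub_distrib]
    have hBe : uB b w - uB b w' = ∑ k, (b k * w' k - b k * w k) := by
      simp [uB, Finset.sum_sub_distrib, mul_sub]
    have hsum : uA a w' - uA a w ≤ t * (uB b w - uB b w') := by
      rw [hAe, hBe, Finset.mul_sum]
      exact Finset.sum_le_sum key
    rcases hst with hs | hs
    · nlinarith
    · nlinarith
  · -- backward: construct an improving allocation
    rintro ⟨i, j, hj, hi, hab⟩ hpo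
    apply hpo
    have hai := ha.1 i; have haj := ha.1 j; have hbi := hb.1 i; have hbj := hb.1 j
    have hij : i ≠ j := by rintro rfl; exact lt_irrefl _ hab
    have hlt : a j / a i < b j / b i := by
      rw [div_lt_div_iff₀ hai hbi]; nlinarith
    set r : ℝ := (a j / a i + b j / b i) / 2 with hr_def
    have hr1 : a j / a i < r := by rw [hr_def]; linarith
    have hr2 : r < b j / b i := by rw [hr_def]; linarith
    have hr0 : 0 < r := lt_trans (div_pos haj hai) hr1
    set ε : ℝ := min (w j) ((1 - w i) / r) with hε_def
    have hε : 0 < ε := lt_min hj (div_pos (by linarith) hr0)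
    have hε1 : ε ≤ w j := min_le_left _ _
    have hε2 : ε * r ≤ 1 - w i := (le_div_iff₀ hr0).mp (min_le_right _ _)
    set δ : ℝ := ε * r with hδ_def
    have hδ0 : 0 < δ := mul_pos hε hr0
    set w'' : Fin m → ℝ := fun k => if k = i then w i + δ else if k = j then w j - ε else w k
      with hw''_def
    have hw''i : w'' i = w i + δ := by simp [hw''_def]
    have hw''j : w'' j = w j - ε := by simp [hw''_def, hij.symm]
    have sumA : uA a w'' = uA a w + (a i * δ - a j * ε) := by
      have hpt : ∀ k ∈ (univ : Finset (Fin m)), a k * w'' k =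
          a k * w k + ((if k = i then a i * δ else 0) + (if k = j then -(a j * ε) else 0)) := by
        intro k _
        by_cases hk : k = i
        · subst hk; rw [hw''i]; simp [hij]; ring
        · by_cases hk' : k = j
          · subst hk'; rw [hw''j]; simp [hk]; ring
          · have : w'' k = w k := by simp [hw''_def, hk, hk']
            rw [this]; simp [hk, hk']
      rw [uA, Finset.sum_congr rfl hpt, Finset.sum_add_distrib, Finset.sum_add_distrib,
        Finset.sum_ite_eq' univ i, Finset.sum_ite_eq' univ j]
      simp [uA]; ring
    have sumB : uB b w'' = uB b w + (b j * ε - b i * δ) := by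
      have hpt : ∀ k ∈ (univ : Finset (Fin m)), b k * (1 - w'' k) =
          b k * (1 - w k) + ((if k = i then -(b i * δ) else 0) + (if k = j then b j * ε else 0)) := by
        intro k _
        by_cases hk : k = i
        · subst hk; rw [hw''i]; simp [hij]; ring
        · by_cases hk' : k = j
          · subst hk'; rw [hw''j]; simp [hk]; ring
          · have : w'' k = w k := by simp [hw''_def, hk, hk']
            rw [this]; simp [hk, hk']
      rw [uB, Finset.sum_congr rfl hpt, Finset.sum_add_distrib, Finset.sum_add_distrib,
        Finset.sum_ite_eq' univ i, Finset.sum_ite_eq' univ j]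
      simp [uB]; ring
    have gainA : 0 < a i * δ - a j * ε := by
      have : a j < r * a i := (div_lt_iff₀ hai).mp hr1
      rw [hδ_def]; nlinarith
    have gainB : 0 < b j * ε - b i * δ := by
      have : r * b i < b j := by
        have := (lt_div_iff₀ hbi).mp hr2; linarith
      rw [hδ_def]; nlinarith
    refine ⟨w'', ?_, ?_, ?_, ?_⟩
    · intro k
      by_cases hk : k = i
      · subst hk
        rw [hw''i]
        constructor
        · have := (hw k).1; linarith
        · linarith
      · by_cases hk' : k = j
        · subst hk'
          rw [hw''j]
          constructor
          · linarith
          · have := (hw k).2; linarith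
        · have : w'' k = w k := by simp [hw''_def, hk, hk']
          rw [this]; exact hw k
    · rw [sumA]; linarith
    · rw [sumB]; linarith
    · left; rw [sumA]; linarith
end

section
/- An allocation w is Pareto optimal and minimally fractional if and only if it is ordered. -/
open Finset

lemma po_exchange {m : ℕ} (a b w : Fin m → ℝ) (ha : IsValuation a) (hb : IsValuation b)
    (hw : IsAlloc w) (hpo : ParetoOptimal a b w) :
    ∀ i j, 0 < w i → w j < 1 → a j * b i ≤ a i * b j := by
  intro i j hwi hwj
  by_contra hcon
  push_neg at hcon
  have hij : i ≠ j := by rintro rfl; exact lt_irrefl _ hcon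
  have hbi : 0 < b i := hb.1 i
  have hbj : 0 < b j := hb.1 j
  set ε : ℝ := min (w i) ((1 - w j) * b j / b i) with hεdef
  have hε : 0 < ε := lt_min hwi (div_pos (mul_pos (by linarith) hbj) hbi)
  have hεwi : ε ≤ w i := min_le_left _ _
  set δ : ℝ := ε * b i / b j with hδdef
  have hδ : 0 < δ := by positivity
  have hδle : δ ≤ 1 - w j := by
    have h2 : ε ≤ (1 - w j) * b j / b i := min_le_right _ _
    rw [hδdef, div_le_iff₀ hbj]
    have h3 := mul_le_mul_of_nonneg_right h2 hbi.le
    rw [div_mul_cancel₀ _ hbi.ne'] at h3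
    nlinarith
  set w' : Fin m → ℝ := fun x => w x - (if x = i then ε else 0) + (if x = j then δ else 0)
    with hw'def
  have hw' : IsAlloc w' := by
    intro x
    have hwx := hw x
    simp only [hw'def]
    split_ifs with h1 h2 h2
    · exact absurd (h1 ▸ h2) hij
    · subst h1; constructor <;> linarith
    · subst h2; constructor <;> linarith
    · constructor <;> linarith
  have hA' : uA a w' = uA a w - a i * ε + a j * δ := by
    have hx : ∀ x : Fin m, a x * w' x =
        a x * w x - a x * (if x = i then ε else 0) + a x * (if x = j then δ else 0) := by
      intro x; simp only [hw'def]; ring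
    simp only [uA, hx, Finset.sum_add_distrib, Finset.sum_sub_distrib, mul_ite, mul_zero,
      Finset.sum_ite_eq', Finset.mem_univ, if_true]
  have hB' : uB b w' = uB b w + b i * ε - b j * δ := by
    have hx : ∀ x : Fin m, b x * (1 - w' x) =
        b x * (1 - w x) + b x * (if x = i then ε else 0) - b x * (if x = j then δ else 0) := by
      intro x; simp only [hw'def]; ring
    simp only [uB, hx, Finset.sum_add_distrib, Finset.sum_sub_distrib, mul_ite, mul_zero,
      Finset.sum_ite_eq', Finset.mem_univ, if_true]
  have hBeq : uB b w' = uB b w := by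
    rw [hB', hδdef]; field_simp; ring
  have hkey : a i * ε * b j < a j * δ * b j := by
    have hq : a j * δ * b j = a j * (ε * b i) := by rw [hδdef]; field_simp
    rw [hq]; nlinarith
  have hAlt : uA a w < uA a w' := by
    rw [hA']
    have := (mul_lt_mul_iff_of_pos_right hbj).1 hkey
    linarith
  exact hpo ⟨w', hw', hAlt.le, hBeq.ge, Or.inl hAlt⟩

/-- an allocation is Pareto optimal and minimally fractional
iff it is ordered. -/
theorem paretoOptimal_and_minimallyFractional_iff_ordered (m : ℕ) (hm : 1 ≤ m)
    (a b w : Fin m → ℝ) (ha : IsValuation a) (hb : IsValuation b) (hw : IsAlloc w) :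
    (ParetoOptimal a b w ∧ MinimallyFractional w) ↔ Ordered a b w := by
  constructor
  · rintro ⟨hpo, k0, hk0⟩
    have hE := po_exchange a b w ha hb hw hpo
    set f : Fin m → ℝ ×ₗ ℝ := fun x => toLex (b x / a x, 1 - w x) with hf
    set π : Equiv.Perm (Fin m) := Tuple.sort f with hπ
    have hmono : Monotone (f ∘ π) := Tuple.monotone_sort f
    have hratio : ∀ i j : Fin m, i ≤ j → a (π j) * b (π i) ≤ a (π i) * b (π j) := by
      intro i j hij
      have h := hmono hij
      simp only [Function.comp_apply, hf] at h
      have hfst : b (π i) / a (π i) ≤ b (π j) / a (π j) := by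
        rcases Prod.Lex.toLex_le_toLex.1 h with h' | ⟨h', _⟩
        · exact le_of_lt h'
        · exact le_of_eq h'
      rw [div_le_div_iff₀ (ha.1 _) (ha.1 _)] at hfst
      linarith
    have hanti : ∀ i j : Fin m, i < j → w (π j) ≤ w (π i) := by
      intro i j hij
      have h := hmono hij.le
      simp only [Function.comp_apply, hf] at h
      rcases Prod.Lex.toLex_le_toLex.1 h with h' | ⟨_, h2⟩
      · by_contra hlt
        push_neg at hlt
        have h0 : 0 < w (π j) := lt_of_le_of_lt (hw (π i)).1 hlt
        have h1 : w (π i) < 1 := lt_of_lt_of_le hlt (hw (π j)).2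
        have := hE (π j) (π i) h0 h1
        rw [div_lt_div_iff₀ (ha.1 _) (ha.1 _)] at h'
        linarith
      · linarith
    set S := Finset.univ.filter (fun i : Fin m => w (π i) < 1) with hSdef
    by_cases hS : S.Nonempty
    · set l := S.min' hS with hldef
      have hl1 : w (π l) < 1 := (Finset.mem_filter.1 (S.min'_mem hS)).2
      refine ⟨π, fun i j hij => hratio i j hij.le, l, w (π l), (hw _).1, (hw _).2, ?_, rfl, ?_⟩
      · intro i hil
        have hiS : i ∉ S := fun hi => absurd (Finset.min'_le S i hi) (not_le.2 hil)
        have hge : ¬ w (π i) < 1 := fun h =>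
          hiS (Finset.mem_filter.2 ⟨Finset.mem_univ _, h⟩)
        exact le_antisymm (hw (π i)).2 (not_lt.1 hge)
      · intro i hli
        have hle := hanti l i hli
        by_cases hcase : π i = k0
        · have hlk : π l ≠ k0 := by
            rw [← hcase]
            exact fun h => absurd (π.injective h) (ne_of_lt hli)
          rcases hk0 (π l) hlk with h0 | h1
          · exact le_antisymm (by linarith) (hw (π i)).1
          · linarith
        · rcases hk0 (π i) hcase with h0 | h1
          · exact h0
          · linarith
    · have hall : ∀ i : Fin m, w (π i) = 1 := by
        intro i
        by_contra h
        exact hS ⟨i, Finset.mem_filter.2 ⟨Finset.mem_univ _,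
          lt_of_le_of_ne (hw _).2 h⟩⟩
      refine ⟨π, fun i j hij => hratio i j hij.le, ⟨m - 1, by omega⟩, 1, zero_le_one,
        le_refl 1, fun i _ => hall i, hall _, fun i hi => ?_⟩
      have := i.isLt
      rw [Fin.lt_def] at hi
      simp only at hi
      omega
  · rintro ⟨π, hord, l, lam, hlam0, hlam1, hpre, hl, hpost⟩
    constructor
    · rintro ⟨w', hw', hA, hB, hstrict⟩
      set L := π l with hL
      have key : ∀ x : Fin m, a x * b L * (w' x - w x) ≤ a L * b x * (w' x - w x) := by
        intro x
        have hx : π (π.symm x) = x := π.apply_symm_apply x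
        rcases lt_trichotomy (π.symm x) l with hc | hc | hc
        · have hwx : w x = 1 := by rw [← hx]; exact hpre _ hc
          have hd : w' x - w x ≤ 0 := by rw [hwx]; linarith [(hw' x).2]
          have hr : a L * b x ≤ a x * b L := by
            have := hord _ _ hc; rwa [hx] at this
          exact mul_le_mul_of_nonpos_right hr hd
        · have : x = L := by rw [← hx, hc]
          rw [this]
        · have hwx : w x = 0 := by rw [← hx]; exact hpost _ hc
          have hd : 0 ≤ w' x - w x := by rw [hwx]; linarith [(hw' x).1]
          have hr : a x * b L ≤ a L * b x := by
            have := hord _ _ hc; rwa [hx] at this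
          exact mul_le_mul_of_nonneg_right hr hd
      have hsum := Finset.sum_le_sum (fun x (_ : x ∈ Finset.univ) => key x)
      have e1 : ∑ x : Fin m, a x * b L * (w' x - w x) = b L * (uA a w' - uA a w) := by
        rw [uA, uA, mul_sub, Finset.mul_sum, Finset.mul_sum, ← Finset.sum_sub_distrib]
        exact Finset.sum_congr rfl (fun x _ => by ring)
      have e2 : ∑ x : Fin m, a L * b x * (w' x - w x) = a L * (uB b w - uB b w') := by
        rw [uB, uB, mul_sub, Finset.mul_sum, Finset.mul_sum, ← Finset.sum_sub_distrib]
        exact Finset.sum_congr rfl (fun x _ => by ring)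
      rw [e1, e2] at hsum
      have haL : 0 < a L := ha.1 L
      have hbL : 0 < b L := hb.1 L
      rcases hstrict with hst | hst
      · nlinarith
      · nlinarith
    · refine ⟨π l, fun i hi => ?_⟩
      have hx : π (π.symm i) = i := π.apply_symm_apply i
      have hne : π.symm i ≠ l := fun h => hi (by rw [← hx, h])
      rcases lt_or_gt_of_ne hne with hc | hc
      · right; rw [← hx]; exact hpre _ hc
      · left; rw [← hx]; exact hpost _ hc
end

section
/- For every pair of valuation vectors (a, b) there exists an allocation w that is Pareto optimal, equitable, and minimally fractional. -/
open Finset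

/-- for every pair of valuations there is a Pareto optimal,
equitable, and minimally fractional allocation. -/
theorem exists_paretoOptimal_equitable_minimallyFractional (m : ℕ) (hm : 1 ≤ m)
    (a b : Fin m → ℝ) (ha : IsValuation a) (hb : IsValuation b) :
    ∃ w : Fin m → ℝ, IsAlloc w ∧ ParetoOptimal a b w ∧ Equitable a b w ∧
      MinimallyFractional w := by
  obtain ⟨hapos, hasum⟩ := ha
  obtain ⟨hbpos, hbsum⟩ := hb
  obtain ⟨n, rfl⟩ : ∃ n, m = n + 1 := ⟨m - 1, by omega⟩
  set k : Fin (n+1) → ℝ := fun i => b i / a i with hk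
  set σ : Equiv.Perm (Fin (n+1)) := Tuple.sort k with hσ
  have hmono : Monotone (k ∘ σ) := Tuple.monotone_sort k
  set c : Fin (n+1) → ℝ := fun j => a (σ j) + b (σ j) with hc
  have hcpos : ∀ j, 0 < c j := fun j => add_pos (hapos _) (hbpos _)
  have htot : ∑ j, c j = 2 := by
    have h1 : ∑ j, a (σ j) = 1 := by rw [Equiv.sum_comp σ a, hasum]
    have h2 : ∑ j, b (σ j) = 1 := by rw [Equiv.sum_comp σ b, hbsum]
    simp [hc, Finset.sum_add_distrib, h1, h2]; norm_num
  set S : Finset (Fin (n+1)) := Finset.univ.filter (fun l => 1 ≤ ∑ j ∈ Finset.Iic l, c j) with hS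
  have hSne : S.Nonempty := by
    refine ⟨Fin.last n, ?_⟩
    simp only [hS, Finset.mem_filter, Finset.mem_univ, true_and]
    have : Finset.Iic (Fin.last n) = Finset.univ := by
      apply Finset.eq_univ_iff_forall.2
      intro x; simpa using Fin.le_last x
    rw [this, htot]; norm_num
  set l : Fin (n+1) := S.min' hSne with hl
  have hlmem : 1 ≤ ∑ j ∈ Finset.Iic l, c j :=
    (Finset.mem_filter.mp (S.min'_mem hSne)).2
  have hpre : ∑ j ∈ Finset.Iio l, c j < 1 := by
    by_contra h
    push_neg at h
    have hl0 : l ≠ 0 := by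
      intro h0
      rw [h0, show Finset.Iio (0 : Fin (n+1)) = ∅ from by ext x; simp] at h
      simp at h
      linarith
    set l' : Fin (n+1) := ⟨l.val - 1, by omega⟩ with hl'
    have hIic : Finset.Iic l' = Finset.Iio l := by
      ext x
      simp only [Finset.mem_Iic, Finset.mem_Iio, Fin.le_def, Fin.lt_def, hl']
      have : l.val ≠ 0 := fun hh => hl0 (Fin.ext hh)
      omega
    have hmem : l' ∈ S := by
      rw [hS, Finset.mem_filter]
      exact ⟨Finset.mem_univ _, by rw [hIic]; exact h⟩
    have := S.min'_le l' hmem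
    have hlt : l' < l := by
      rw [Fin.lt_def]
      have : l.val ≠ 0 := fun hh => hl0 (Fin.ext hh)
      show l.val - 1 < l.val; omega
    exact absurd (lt_of_le_of_lt this hlt) (lt_irrefl _)
  have hIic_split : ∑ j ∈ Finset.Iic l, c j = (∑ j ∈ Finset.Iio l, c j) + c l := by
    rw [← Finset.Iio_insert, Finset.sum_insert (by simp)]
    ring
  set lam : ℝ := (1 - ∑ j ∈ Finset.Iio l, c j) / c l with hlam
  have hlam0 : 0 ≤ lam := div_nonneg (by linarith) (hcpos l).le
  have hlam1 : lam ≤ 1 := by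
    rw [hlam, div_le_one (hcpos l)]
    linarith [hlmem, hIic_split]
  set w : Fin (n+1) → ℝ := fun i =>
    if σ.symm i < l then 1 else if σ.symm i = l then lam else 0 with hw
  have hwσ : ∀ j, w (σ j) = if j < l then 1 else if j = l then lam else 0 := by
    intro j; simp [hw]
  have hwalloc : IsAlloc w := by
    intro i
    simp only [hw]
    split_ifs
    · exact ⟨zero_le_one, le_refl 1⟩
    · exact ⟨hlam0, hlam1⟩
    · exact ⟨le_refl 0, zero_le_one⟩
  -- key sum computation
  have hsum_gen : ∀ u : Fin (n+1) → ℝ,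
      ∑ i, u i * w i = (∑ j ∈ Finset.Iio l, u (σ j)) + u (σ l) * lam := by
    intro u
    rw [← Equiv.sum_comp σ (fun i => u i * w i)]
    have : ∀ j, u (σ j) * w (σ j)
        = if j < l then u (σ j) else if j = l then u (σ l) * lam else 0 := by
      intro j
      rw [hwσ]
      split_ifs with h1 h2
      · ring
      · rw [h2]
      · ring
    rw [Finset.sum_congr rfl (fun j _ => this j)]
    rw [← Finset.sum_subset (Finset.subset_univ (Finset.Iic l))]
    · rw [← Finset.Iio_insert, Finset.sum_insert (by simp)]
      rw [if_neg (lt_irrefl l), if_pos rfl]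
      rw [Finset.sum_congr rfl (fun j hj => if_pos (Finset.mem_Iio.mp hj))]
      ring
    · intro x _ hx
      rw [Finset.mem_Iic] at hx
      rw [if_neg (fun h => hx h.le), if_neg (fun h => hx (le_of_eq h))]
  have hkey : ∑ i, (a i + b i) * w i = 1 := by
    rw [hsum_gen (fun i => a i + b i)]
    have : (∑ j ∈ Finset.Iio l, (a (σ j) + b (σ j))) = ∑ j ∈ Finset.Iio l, c j :=
      Finset.sum_congr rfl (fun j _ => rfl)
    have h2 : c l * ((1 - ∑ j ∈ Finset.Iio l, c j) / c l) = 1 - ∑ j ∈ Finset.Iio l, c j := by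
      rw [mul_div_assoc']
      exact mul_div_cancel_left₀ _ (hcpos l).ne'
    rw [this, hlam, h2]
    ring
  have hbw : ∑ i, b i * w i = 1 - uB b w := by
    rw [uB]
    have : ∑ i, b i * (1 - w i) = ∑ i, b i - ∑ i, b i * w i := by
      rw [← Finset.sum_sub_distrib]
      exact Finset.sum_congr rfl (fun i _ => by ring)
    rw [this, hbsum]; ring
  have hequi : Equitable a b w := by
    rw [Equitable, uA]
    have : ∑ i, a i * w i = 1 - ∑ i, b i * w i := by
      have : ∑ i, (a i + b i) * w i = ∑ i, a i * w i + ∑ i, b i * w i := by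
        rw [← Finset.sum_add_distrib]
        exact Finset.sum_congr rfl (fun i _ => by ring)
      linarith [hkey, this]
    rw [this, hbw]; ring
  refine ⟨w, hwalloc, ?_, hequi, ⟨σ l, ?_⟩⟩
  · -- Pareto optimality
    rintro ⟨w', hw', h1, h2, h3⟩
    set ca : ℝ := a (σ l) / b (σ l) with hca
    have hcapos : 0 < ca := div_pos (hapos _) (hbpos _)
    have keyi : ∀ i, (a i - ca * b i) * w' i ≤ (a i - ca * b i) * w i := by
      intro i
      rcases lt_trichotomy (a i - ca * b i) 0 with hlt | heq | hgt
      · -- a i / b i < ratio at l, so k i > k (σ l), so σ.symm i > l, w i = 0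
        have hki : k (σ l) < k i := by
          rw [hk]
          rw [div_lt_div_iff₀ (hapos (σ l)) (hapos i)]
          have : a i * b (σ l) < a (σ l) * b i := by
            rw [hca] at hlt
            have hb' := hbpos (σ l)
            rw [sub_neg, div_mul_eq_mul_div, lt_div_iff₀ hb'] at hlt
            linarith
          linarith
        have hgt' : l < σ.symm i := by
          by_contra hle
          push_neg at hle
          have := hmono hle
          simp only [Function.comp_apply, Equiv.apply_symm_apply] at this
          linarith
        have hw0 : w i = 0 := by
          simp only [hw]
          rw [if_neg (by exact fun h => absurd (h.trans hgt') (lt_irrefl _)),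
            if_neg (by exact fun h => absurd (h ▸ hgt') (lt_irrefl _))]
        rw [hw0, mul_zero]
        exact mul_nonpos_of_nonpos_of_nonneg hlt.le (hw' i).1
      · rw [heq, zero_mul, zero_mul]
      · -- w i = 1
        have hki : k i < k (σ l) := by
          rw [hk]
          rw [div_lt_div_iff₀ (hapos i) (hapos (σ l))]
          have : a (σ l) * b i < a i * b (σ l) := by
            rw [hca] at hgt
            have hb' := hbpos (σ l)
            rw [sub_pos, div_mul_eq_mul_div, div_lt_iff₀ hb'] at hgt
            linarith
          linarith
        have hlt' : σ.symm i < l := by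
          by_contra hle
          push_neg at hle
          have := hmono hle
          simp only [Function.comp_apply, Equiv.apply_symm_apply] at this
          linarith
        have hw1 : w i = 1 := by simp only [hw]; rw [if_pos hlt']
        rw [hw1, mul_one]
        have := (hw' i).2
        nlinarith
    have hsumle : ∑ i, (a i - ca * b i) * w' i ≤ ∑ i, (a i - ca * b i) * w i :=
      Finset.sum_le_sum (fun i _ => keyi i)
    have expand : ∀ v : Fin (n+1) → ℝ,
        ∑ i, (a i - ca * b i) * v i = (∑ i, a i * v i) - ca * ∑ i, b i * v i := by
      intro v
      rw [Finset.mul_sum, ← Finset.sum_sub_distrib]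
      exact Finset.sum_congr rfl (fun i _ => by ring)
    rw [expand w', expand w] at hsumle
    have hbw' : ∑ i, b i * w' i = 1 - uB b w' := by
      rw [uB]
      have : ∑ i, b i * (1 - w' i) = ∑ i, b i - ∑ i, b i * w' i := by
        rw [← Finset.sum_sub_distrib]
        exact Finset.sum_congr rfl (fun i _ => by ring)
      rw [this, hbsum]; ring
    rw [hbw, hbw'] at hsumle
    have hA : (∑ i, a i * w i) = uA a w := rfl
    have hA' : (∑ i, a i * w' i) = uA a w' := rfl
    rw [hA, hA'] at hsumle
    rcases h3 with h3 | h3 <;> nlinarith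
  · -- minimally fractional
    intro i hi
    have hne : σ.symm i ≠ l := by
      intro h
      exact hi (by rw [← h, Equiv.apply_symm_apply])
    simp only [hw]
    rcases lt_or_gt_of_ne hne with h | h
    · right; rw [if_pos h]
    · left; rw [if_neg (by exact fun hh => absurd (hh.trans h) (lt_irrefl _)), if_neg hne]
end

section
/- If the valuation vectors a, b satisfy a_i · b_j ≠ a_j · b_i for all items i ≠ j (i.e., all ratios a_i/b_i are distinct), then there is exactly one allocation that is both Pareto optimal and equitable: any two allocations that are each Pareto optimal and equitable with respect to (a,b) are equal as vectors in [0,1]^m. -/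
open Finset

lemma improve_aux {m : ℕ} (a b : Fin m → ℝ) (hb : ∀ k, 0 < b k)
    (v : Fin m → ℝ) (hv : IsAlloc v) (i j : Fin m) (hij : i ≠ j)
    (hvi : v i < 1) (hvj : 0 < v j) (hd : a j * b i < a i * b j) :
    ∃ v', IsAlloc v' ∧ uA a v < uA a v' ∧ uB b v' = uB b v := by
  set ε := min ((1 - v i) / b j) (v j / b i) with hεdef
  have hε0 : 0 < ε := lt_min (div_pos (by linarith) (hb j)) (div_pos hvj (hb i))
  have hεi : ε * b j ≤ 1 - v i := by
    have h1 : ε ≤ (1 - v i) / b j := min_le_left _ _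
    calc ε * b j ≤ ((1 - v i) / b j) * b j := by nlinarith [hb j]
      _ = 1 - v i := by rw [div_mul_cancel₀ _ (ne_of_gt (hb j))]
  have hεj : ε * b i ≤ v j := by
    have h1 : ε ≤ v j / b i := min_le_right _ _
    calc ε * b i ≤ (v j / b i) * b i := by nlinarith [hb i]
      _ = v j := by rw [div_mul_cancel₀ _ (ne_of_gt (hb i))]
  refine ⟨fun k => v k + ε * (if k = i then b j else if k = j then -(b i) else 0), ?_, ?_, ?_⟩
  · intro k
    rcases eq_or_ne k i with rfl | hki
    · simp only [if_pos rfl, if_true, eq_self_iff_true]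
      constructor
      · nlinarith [(hv k).1, hb j]
      · linarith
    · rcases eq_or_ne k j with rfl | hkj
      · simp only [if_neg hki, if_pos rfl, if_true, eq_self_iff_true]
        constructor
        · linarith
        · nlinarith [(hv k).2, hb i]
      · simp only [if_neg hki, if_neg hkj, mul_zero, add_zero]
        exact hv k
  · have key : ∀ k, a k * (v k + ε * (if k = i then b j else if k = j then -(b i) else 0))
        = a k * v k + (if k = i then ε * (a i * b j) else if k = j then -(ε * (a j * b i)) else 0) := by
      intro k
      rcases eq_or_ne k i with rfl | hki
      · simp only [if_pos rfl, if_true, eq_self_iff_true]; ring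
      · rcases eq_or_ne k j with rfl | hkj
        · simp only [if_neg hki, if_pos rfl, if_true, eq_self_iff_true]; ring
        · simp only [if_neg hki, if_neg hkj]; ring
    show uA a v < ∑ k, a k * (v k + ε * _)
    rw [Finset.sum_congr rfl fun k _ => key k, Finset.sum_add_distrib]
    have h2 : ∑ k, (if k = i then ε * (a i * b j) else if k = j then -(ε * (a j * b i)) else 0)
        = ε * (a i * b j) - ε * (a j * b i) := by
      rw [Fintype.sum_eq_add i j hij ?_]
      · simp [hij, Ne.symm hij]; ring
      · intro k ⟨hki, hkj⟩; simp [hki, hkj]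
    rw [h2]
    have : 0 < ε * (a i * b j) - ε * (a j * b i) := by nlinarith
    unfold uA; linarith
  · have key : ∀ k, b k * (1 - (v k + ε * (if k = i then b j else if k = j then -(b i) else 0)))
        = b k * (1 - v k) + (if k = i then -(ε * (b i * b j)) else if k = j then ε * (b j * b i) else 0) := by
      intro k
      rcases eq_or_ne k i with rfl | hki
      · simp only [if_pos rfl, if_true, eq_self_iff_true]; ring
      · rcases eq_or_ne k j with rfl | hkj
        · simp only [if_neg hki, if_pos rfl, if_true, eq_self_iff_true]; ring
        · simp only [if_neg hki, if_neg hkj]; ring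
    show (∑ k, b k * (1 - (v k + ε * _))) = uB b v
    rw [Finset.sum_congr rfl fun k _ => key k, Finset.sum_add_distrib]
    have h2 : ∑ k, (if k = i then -(ε * (b i * b j)) else if k = j then ε * (b j * b i) else 0) = 0 := by
      rw [Fintype.sum_eq_add i j hij ?_]
      · simp [hij, Ne.symm hij]; ring
      · intro k ⟨hki, hkj⟩; simp [hki, hkj]
    rw [h2]; unfold uB; ring

/-- if all ratios `a i / b i` are distinct, then the Pareto optimal
and equitable allocation is unique. -/
theorem paretoOptimal_equitable_unique (m : ℕ) (hm : 1 ≤ m)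
    (a b : Fin m → ℝ) (ha : IsValuation a) (hb : IsValuation b)
    (hdist : ∀ i j : Fin m, i ≠ j → a i * b j ≠ a j * b i)
    (w w' : Fin m → ℝ) (hw : IsAlloc w) (hw' : IsAlloc w')
    (hwPO : ParetoOptimal a b w) (hwEq : Equitable a b w)
    (hw'PO : ParetoOptimal a b w') (hw'Eq : Equitable a b w') :
    w = w' := by
  obtain ⟨hapos, -⟩ := ha
  obtain ⟨hbpos, -⟩ := hb
  set wm : Fin m → ℝ := fun k => (w k + w' k) / 2 with hwm_def
  have hwm : IsAlloc wm := by
    intro k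
    have h1 := hw k; have h2 := hw' k
    constructor <;> simp only [hwm_def] <;> linarith
  have huAm : uA a wm = (uA a w + uA a w') / 2 := by
    unfold uA
    rw [← Finset.sum_add_distrib, Finset.sum_div]
    refine Finset.sum_congr rfl fun k _ => ?_
    simp only [hwm_def]; ring
  have huBm : uB b wm = (uB b w + uB b w') / 2 := by
    unfold uB
    rw [← Finset.sum_add_distrib, Finset.sum_div]
    refine Finset.sum_congr rfl fun k _ => ?_
    simp only [hwm_def]; ring
  have hEq : Equitable a b w := hwEq
  have huu : uA a w = uA a w' := by
    by_contra h
    rcases lt_or_gt_of_ne h with hlt | hgt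
    · exact hwPO ⟨wm, hwm, by rw [huAm]; linarith,
        by rw [huBm, ← hwEq, ← hw'Eq]; linarith,
        Or.inl (by rw [huAm]; linarith)⟩
    · exact hw'PO ⟨wm, hwm, by rw [huAm]; linarith,
        by rw [huBm, ← hwEq, ← hw'Eq]; linarith,
        Or.inl (by rw [huAm]; linarith)⟩
  by_contra hne
  obtain ⟨i, hi⟩ := Function.ne_iff.mp hne
  have hj : ∃ j, j ≠ i ∧ w j ≠ w' j := by
    by_contra hc
    push_neg at hc
    have hsum : uA a w - uA a w' = a i * (w i - w' i) := by
      unfold uA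
      rw [← Finset.sum_sub_distrib]
      rw [Fintype.sum_eq_single i (fun k hk => by rw [hc k hk]; ring)]
      ring
    have h0 : a i * (w i - w' i) = 0 := by rw [← hsum, huu]; ring
    have : w i - w' i ≠ 0 := sub_ne_zero_of_ne hi
    exact this (by
      rcases mul_eq_zero.mp h0 with h | h
      · exact absurd h (ne_of_gt (hapos i))
      · exact h)
  obtain ⟨j, hji, hjne⟩ := hj
  have interior : ∀ k, w k ≠ w' k → 0 < wm k ∧ wm k < 1 := by
    intro k hk
    have h1 := hw k; have h2 := hw' k
    rcases lt_or_gt_of_ne hk with h | h <;>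
      constructor <;> simp only [hwm_def] <;> linarith
  have hii := interior i hi
  have hjj := interior j hjne
  have huAwm : uA a wm = uA a w := by rw [huAm, huu]; ring
  have huBwm : uB b wm = uB b w := by
    rw [huBm, ← hwEq, ← hw'Eq, huu]; ring
  rcases lt_or_gt_of_ne (hdist j i hji) with hd | hd
  · -- a j * b i < a i * b j : improve at (i, j)
    obtain ⟨v', hv', hlt, heq⟩ :=
      improve_aux a b hbpos wm hwm i j (Ne.symm hji) hii.2 hjj.1 hd
    exact hwPO ⟨v', hv', by rw [← huAwm]; exact le_of_lt hlt,
      le_of_eq (by rw [← huBwm, heq]),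
      Or.inl (by rw [← huAwm]; exact hlt)⟩
  · -- a i * b j < a j * b i : improve at (j, i)
    obtain ⟨v', hv', hlt, heq⟩ :=
      improve_aux a b hbpos wm hwm j i hji hjj.2 hii.1 hd
    exact hwPO ⟨v', hv', by rw [← huAwm]; exact le_of_lt hlt,
      le_of_eq (by rw [← huBwm, heq]),
      Or.inl (by rw [← huAwm]; exact hlt)⟩
end

section
/- An allocation is maxmin if and only if it is Pareto optimal and equitable. -/
open Finset

section Helpers

variable {m : ℕ}

lemma uA_nonneg' (a w : Fin m → ℝ) (ha : IsValuation a) (hw : IsAlloc w) : 0 ≤ uA a w :=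
  Finset.sum_nonneg fun i _ => mul_nonneg (ha.1 i).le (hw i).1

lemma uB_nonneg' (b w : Fin m → ℝ) (hb : IsValuation b) (hw : IsAlloc w) : 0 ≤ uB b w :=
  Finset.sum_nonneg fun i _ => mul_nonneg (hb.1 i).le (by linarith [(hw i).2])

lemma uA_le_one' (a w : Fin m → ℝ) (ha : IsValuation a) (hw : IsAlloc w) : uA a w ≤ 1 := by
  have h : uA a w ≤ ∑ i, a i :=
    Finset.sum_le_sum fun i _ => by nlinarith [ha.1 i, (hw i).2]
  simpa [ha.2] using h

lemma uB_le_one' (b w : Fin m → ℝ) (hb : IsValuation b) (hw : IsAlloc w) : uB b w ≤ 1 := by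
  have h : uB b w ≤ ∑ i, b i :=
    Finset.sum_le_sum fun i _ => by nlinarith [hb.1 i, (hw i).1]
  simpa [hb.2] using h

lemma alloc_shrink (w : Fin m → ℝ) (hw : IsAlloc w) (t : ℝ) (h0 : 0 ≤ t) (h1 : t ≤ 1) :
    IsAlloc (fun i => (1 - t) * w i) := by
  intro i
  dsimp only
  constructor
  · exact mul_nonneg (by linarith) (hw i).1
  · nlinarith [(hw i).1, (hw i).2]

lemma alloc_grow (w : Fin m → ℝ) (hw : IsAlloc w) (t : ℝ) (h0 : 0 ≤ t) (h1 : t ≤ 1) :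
    IsAlloc (fun i => w i + t * (1 - w i)) := by
  intro i
  dsimp only
  constructor
  · nlinarith [(hw i).1, (hw i).2]
  · nlinarith [(hw i).1, (hw i).2]

lemma uA_shrink (a w : Fin m → ℝ) (t : ℝ) :
    uA a (fun i => (1 - t) * w i) = (1 - t) * uA a w := by
  unfold uA
  rw [Finset.mul_sum]
  exact Finset.sum_congr rfl fun i _ => by ring

lemma uB_shrink (b w : Fin m → ℝ) (hb : IsValuation b) (t : ℝ) :
    uB b (fun i => (1 - t) * w i) = uB b w + t * (1 - uB b w) := by
  unfold uB
  have h : ∑ i, b i * (1 - (1 - t) * w i)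
      = ∑ i, (b i * (1 - w i) + t * (b i - b i * (1 - w i))) :=
    Finset.sum_congr rfl fun i _ => by ring
  rw [h, Finset.sum_add_distrib, ← Finset.mul_sum, Finset.sum_sub_distrib, hb.2]

lemma uB_grow (b w : Fin m → ℝ) (t : ℝ) :
    uB b (fun i => w i + t * (1 - w i)) = (1 - t) * uB b w := by
  unfold uB
  rw [Finset.mul_sum]
  exact Finset.sum_congr rfl fun i _ => by ring

lemma uA_grow (a w : Fin m → ℝ) (ha : IsValuation a) (t : ℝ) :
    uA a (fun i => w i + t * (1 - w i)) = uA a w + t * (1 - uA a w) := by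
  unfold uA
  have h : ∑ i, a i * (w i + t * (1 - w i))
      = ∑ i, (a i * w i + t * (a i - a i * w i)) :=
    Finset.sum_congr rfl fun i _ => by ring
  rw [h, Finset.sum_add_distrib, ← Finset.mul_sum, Finset.sum_sub_distrib, ha.2]

/-- No allocation strictly dominates a maxmin allocation in both coordinates. -/
lemma no_strict_dom (a b w : Fin m → ℝ) (hmax : Maxmin a b w) :
    ¬ ∃ w' : Fin m → ℝ, IsAlloc w' ∧ uA a w < uA a w' ∧ uB b w < uB b w' := by
  rintro ⟨w', hw', hA, hB⟩
  have h1 : min (uA a w) (uB b w) < min (uA a w') (uB b w') :=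
    lt_min (lt_of_le_of_lt (min_le_left _ _) hA) (lt_of_le_of_lt (min_le_right _ _) hB)
  exact absurd (hmax w' hw') (not_le.mpr h1)

lemma uA_zero_of_uB_one (a b w' : Fin m → ℝ) (hb : IsValuation b) (hw' : IsAlloc w')
    (h : uB b w' = 1) : uA a w' = 0 := by
  have e : uB b w' + ∑ i, b i * w' i = ∑ i, b i := by
    unfold uB
    rw [← Finset.sum_add_distrib]
    exact Finset.sum_congr rfl fun i _ => by ring
  have hs : ∑ i, b i * w' i = 0 := by rw [hb.2] at e; linarith
  have hz : ∀ i ∈ Finset.univ, b i * w' i = 0 :=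
    (Finset.sum_eq_zero_iff_of_nonneg
      (fun i _ => mul_nonneg (hb.1 i).le (hw' i).1)).mp hs
  have hw0 : ∀ i : Fin m, w' i = 0 := fun i => by
    have := hz i (Finset.mem_univ i)
    have hbi := hb.1 i
    rcases mul_eq_zero.mp this with h' | h'
    · exact absurd h' (ne_of_gt hbi)
    · exact h'
  unfold uA
  exact Finset.sum_eq_zero fun i _ => by rw [hw0 i, mul_zero]

lemma uB_zero_of_uA_one (a b w' : Fin m → ℝ) (ha : IsValuation a) (hw' : IsAlloc w')
    (h : uA a w' = 1) : uB b w' = 0 := by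
  have e : uA a w' + ∑ i, a i * (1 - w' i) = ∑ i, a i := by
    unfold uA
    rw [← Finset.sum_add_distrib]
    exact Finset.sum_congr rfl fun i _ => by ring
  have hs : ∑ i, a i * (1 - w' i) = 0 := by rw [ha.2] at e; linarith
  have hz : ∀ i ∈ Finset.univ, a i * (1 - w' i) = 0 :=
    (Finset.sum_eq_zero_iff_of_nonneg
      (fun i _ => mul_nonneg (ha.1 i).le (by linarith [(hw' i).2]))).mp hs
  have hw1 : ∀ i : Fin m, w' i = 1 := fun i => by
    have := hz i (Finset.mem_univ i)
    have hai := ha.1 i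
    rcases mul_eq_zero.mp this with h' | h'
    · exact absurd h' (ne_of_gt hai)
    · linarith
  unfold uB
  exact Finset.sum_eq_zero fun i _ => by rw [hw1 i]; ring

end Helpers

/-- an allocation is maxmin iff it is Pareto optimal and equitable. -/
theorem maxmin_iff_paretoOptimal_and_equitable (m : ℕ) (hm : 1 ≤ m)
    (a b w : Fin m → ℝ) (ha : IsValuation a) (hb : IsValuation b) (hw : IsAlloc w) :
    Maxmin a b w ↔ ParetoOptimal a b w ∧ Equitable a b w := by
  have hA0 := uA_nonneg' a w ha hw
  have hB0 := uB_nonneg' b w hb hw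
  have hA1 := uA_le_one' a w ha hw
  have hB1 := uB_le_one' b w hb hw
  constructor
  · intro hmax
    have heq : Equitable a b w := by
      by_contra hne
      rcases lt_or_gt_of_ne hne with hlt | hgt
      · -- uA w < uB w : grow w a little
        have hBpos : 0 < uB b w := lt_of_le_of_lt hA0 hlt
        set t := (uB b w - uA a w) / (2 * uB b w) with ht
        have ht0 : 0 < t := div_pos (by linarith) (by linarith)
        have ht1 : t ≤ 1 := by rw [div_le_one (by linarith)]; linarith
        have hw'' := alloc_grow w hw t ht0.le ht1
        have huA := uA_grow a w ha t
        have huB := uB_grow b w t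
        have htB : t * uB b w = (uB b w - uA a w) / 2 := by
          rw [ht]; field_simp
        have h1 : uA a w < uA a (fun i => w i + t * (1 - w i)) := by
          rw [huA]; nlinarith
        have h2 : uA a w < uB b (fun i => w i + t * (1 - w i)) := by
          rw [huB]; nlinarith
        have hle := hmax _ hw''
        rw [min_eq_left hlt.le] at hle
        exact absurd hle (not_le.mpr (lt_min h1 h2))
      · -- uB w < uA w : shrink w a little
        have hApos : 0 < uA a w := lt_of_le_of_lt hB0 hgt
        set t := (uA a w - uB b w) / (2 * uA a w) with ht
        have ht0 : 0 < t := div_pos (by linarith) (by linarith)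
        have ht1 : t ≤ 1 := by rw [div_le_one (by linarith)]; linarith
        have hw'' := alloc_shrink w hw t ht0.le ht1
        have huA := uA_shrink a w t
        have huB := uB_shrink b w hb t
        have htA : t * uA a w = (uA a w - uB b w) / 2 := by
          rw [ht]; field_simp
        have h1 : uB b w < uA a (fun i => (1 - t) * w i) := by
          rw [huA]; nlinarith
        have h2 : uB b w < uB b (fun i => (1 - t) * w i) := by
          rw [huB]; nlinarith
        have hle := hmax _ hw''
        rw [min_eq_right hgt.le] at hle
        exact absurd hle (not_le.mpr (lt_min h1 h2))
    refine ⟨?_, heq⟩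
    rintro ⟨w', hw', hAle, hBle, hstrict⟩
    have hA0' := uA_nonneg' a w' ha hw'
    have hB0' := uB_nonneg' b w' hb hw'
    have hA1' := uA_le_one' a w' ha hw'
    have hB1' := uB_le_one' b w' hb hw'
    rcases hstrict with hAlt | hBlt
    · -- uA w < uA w' : shrink w' slightly to improve Bob strictly too
      rcases lt_or_eq_of_le hB1' with hBlt1 | hBeq1
      · have hApos' : 0 < uA a w' := lt_of_le_of_lt hA0 hAlt
        set t := (uA a w' - uA a w) / (2 * uA a w') with ht
        have ht0 : 0 < t := div_pos (by linarith) (by linarith)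
        have ht1 : t ≤ 1 := by rw [div_le_one (by linarith)]; linarith
        have hw'' := alloc_shrink w' hw' t ht0.le ht1
        have huA := uA_shrink a w' t
        have huB := uB_shrink b w' hb t
        have htA : t * uA a w' = (uA a w' - uA a w) / 2 := by
          rw [ht]; field_simp
        refine no_strict_dom a b w hmax ⟨_, hw'', ?_, ?_⟩
        · rw [huA]; nlinarith
        · rw [huB]; nlinarith
      · have := uA_zero_of_uB_one a b w' hb hw' hBeq1
        linarith
    · -- uB w < uB w' : grow w' slightly to improve Alice strictly too
      rcases lt_or_eq_of_le hA1' with hAlt1 | hAeq1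
      · have hBpos' : 0 < uB b w' := lt_of_le_of_lt hB0 hBlt
        set t := (uB b w' - uB b w) / (2 * uB b w') with ht
        have ht0 : 0 < t := div_pos (by linarith) (by linarith)
        have ht1 : t ≤ 1 := by rw [div_le_one (by linarith)]; linarith
        have hw'' := alloc_grow w' hw' t ht0.le ht1
        have huA := uA_grow a w' ha t
        have huB := uB_grow b w' t
        have htB : t * uB b w' = (uB b w' - uB b w) / 2 := by
          rw [ht]; field_simp
        refine no_strict_dom a b w hmax ⟨_, hw'', ?_, ?_⟩
        · rw [huA]; nlinarith
        · rw [huB]; nlinarith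
      · have := uB_zero_of_uA_one a b w' ha hw' hAeq1
        linarith
  · rintro ⟨hpo, heq⟩ w' hw'
    by_contra h
    push_neg at h
    rw [heq, min_self] at h
    have hB' : uB b w < uB b w' := lt_of_lt_of_le h (min_le_right _ _)
    have hA' : uA a w < uA a w' := by
      rw [heq]; exact lt_of_lt_of_le h (min_le_left _ _)
    exact hpo ⟨w', hw', hA'.le, hB'.le, Or.inl hA'⟩
end

section
/- Every allocation that is Pareto optimal and equitable is envy-free; in particular, each player's utility in such an allocation is at least 1/2. -/
open Finset

/-- every Pareto optimal and equitable allocation is envy-free;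
in particular each player's utility is at least `1/2`. -/
theorem paretoOptimal_equitable_envyFree (m : ℕ) (hm : 1 ≤ m)
    (a b w : Fin m → ℝ) (ha : IsValuation a) (hb : IsValuation b) (hw : IsAlloc w)
    (hPO : ParetoOptimal a b w) (hEq : Equitable a b w) :
    EnvyFree a b w ∧ 1 / 2 ≤ uA a w ∧ 1 / 2 ≤ uB b w := by
  have hsa : ∑ i, a i = 1 := ha.2
  have hsb : ∑ i, b i = 1 := hb.2
  have key : ∀ v u : Fin m → ℝ, ∑ i, v i * (1 - u i) = (∑ i, v i) - ∑ i, v i * u i := by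
    intro v u
    rw [← Finset.sum_sub_distrib]
    exact Finset.sum_congr rfl fun i _ => by ring
  have hA' : uA a (fun i => 1 - w i) = 1 - uA a w := by
    simp only [uA]; rw [key, hsa]
  have hB' : uB b (fun i => 1 - (w i)) = 1 - uB b w := by
    simp only [uB, sub_sub_cancel]
    rw [key, hsb]; ring
  have hkey : 1 / 2 ≤ uA a w := by
    by_contra hlt
    push_neg at hlt
    apply hPO
    refine ⟨fun i => 1 - w i, ?_, ?_, ?_, ?_⟩
    · intro i
      simp only
      constructor
      · linarith [(hw i).2]
      · linarith [(hw i).1]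
    · rw [hA']; linarith
    · rw [hB', ← hEq]; linarith
    · left; rw [hA']; linarith
  have hBkey : 1 / 2 ≤ uB b w := hEq ▸ hkey
  refine ⟨⟨?_, ?_⟩, hkey, hBkey⟩
  · rw [key, hsa]; show 1 - uA a w ≤ uA a w; linarith
  · have h1 : (∑ i, b i * w i) = 1 - uB b w := by
      have : uB b w = 1 - ∑ i, b i * w i := by simp only [uB]; rw [key, hsb]
      rw [this]; ring
    rw [h1]; show 1 - uB b w ≤ uB b w; linarith
end

section
/- Suppose m = 2 and the true valuations satisfy b_1 > a_1 > a_2 > b_2 > 0 (with a_1 + a_2 = b_1 + b_2 = 1). Then no strategy profile (x, y) ∈ (0,1) × (0,1) is a pure Nash equilibrium of the two-item Adjusted Winner game with lexicographic tie-breaking: for every (x,y), some player can strictly increase her/his payoff by a unilateral deviation within (0,1). -/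
/-- The two-item Adjusted Winner outcome with lexicographic tie-breaking:
given strategies `x, y ∈ (0,1)` (reports `(x, 1-x)` and `(y, 1-y)`),
returns the pair of fractions of items 1 and 2 that Alice receives. -/
noncomputable def aw2 (x y : ℝ) : ℝ × ℝ :=
  if y ≤ x then
    if 1 ≤ x + y then (1 / (x + y), 0) else (1, (1 - x - y) / (2 - x - y))
  else
    if x + y ≤ 1 then (0, 1 / (2 - x - y)) else ((x + y - 1) / (x + y), 1)

/-- Alice's payoff at strategy profile `(x, y)`, when her true valuation is `(a₁, a₂)`. -/
noncomputable def payA (a₁ a₂ x y : ℝ) : ℝ :=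
  a₁ * (aw2 x y).1 + a₂ * (aw2 x y).2

/-- Bob's payoff at strategy profile `(x, y)`, when his true valuation is `(b₁, b₂)`. -/
noncomputable def payB (b₁ b₂ x y : ℝ) : ℝ :=
  b₁ * (1 - (aw2 x y).1) + b₂ * (1 - (aw2 x y).2)

lemma payA1 (a₁ a₂ x y : ℝ) (h : y ≤ x) (h1 : 1 ≤ x + y) :
    payA a₁ a₂ x y = a₁ * (1 / (x + y)) + a₂ * 0 := by
  unfold payA aw2; rw [if_pos h, if_pos h1]

lemma payA2 (a₁ a₂ x y : ℝ) (h : y ≤ x) (h1 : ¬ 1 ≤ x + y) :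
    payA a₁ a₂ x y = a₁ * 1 + a₂ * ((1 - x - y) / (2 - x - y)) := by
  unfold payA aw2; rw [if_pos h, if_neg h1]

lemma payA3 (a₁ a₂ x y : ℝ) (h : ¬ y ≤ x) (h1 : x + y ≤ 1) :
    payA a₁ a₂ x y = a₁ * 0 + a₂ * (1 / (2 - x - y)) := by
  unfold payA aw2; rw [if_neg h, if_pos h1]

lemma payA4 (a₁ a₂ x y : ℝ) (h : ¬ y ≤ x) (h1 : ¬ x + y ≤ 1) :
    payA a₁ a₂ x y = a₁ * ((x + y - 1) / (x + y)) + a₂ * 1 := by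
  unfold payA aw2; rw [if_neg h, if_neg h1]

lemma payB1 (b₁ b₂ x y : ℝ) (h : y ≤ x) (h1 : 1 ≤ x + y) :
    payB b₁ b₂ x y = b₁ * (1 - 1 / (x + y)) + b₂ * (1 - 0) := by
  unfold payB aw2; rw [if_pos h, if_pos h1]

lemma payB2 (b₁ b₂ x y : ℝ) (h : y ≤ x) (h1 : ¬ 1 ≤ x + y) :
    payB b₁ b₂ x y = b₁ * (1 - 1) + b₂ * (1 - (1 - x - y) / (2 - x - y)) := by
  unfold payB aw2; rw [if_pos h, if_neg h1]

lemma payB3 (b₁ b₂ x y : ℝ) (h : ¬ y ≤ x) (h1 : x + y ≤ 1) :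
    payB b₁ b₂ x y = b₁ * (1 - 0) + b₂ * (1 - 1 / (2 - x - y)) := by
  unfold payB aw2; rw [if_neg h, if_pos h1]

lemma payB4 (b₁ b₂ x y : ℝ) (h : ¬ y ≤ x) (h1 : ¬ x + y ≤ 1) :
    payB b₁ b₂ x y = b₁ * (1 - (x + y - 1) / (x + y)) + b₂ * (1 - 1) := by
  unfold payB aw2; rw [if_neg h, if_neg h1]

set_option maxHeartbeats 2000000 in
/-- if `b₁ > a₁ > a₂ > b₂ > 0` (with `a₁ + a₂ = b₁ + b₂ = 1`), then
no strategy profile `(x, y) ∈ (0,1) × (0,1)` is a pure Nash equilibrium of the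
two-item Adjusted Winner game with lexicographic tie-breaking. -/
theorem aw2_no_pure_nash (a₁ a₂ b₁ b₂ : ℝ)
    (h₁ : b₁ > a₁) (h₂ : a₁ > a₂) (h₃ : a₂ > b₂) (h₄ : b₂ > 0)
    (hsa : a₁ + a₂ = 1) (hb : b₁ + b₂ = 1) :
    ∀ x y : ℝ, x ∈ Set.Ioo (0 : ℝ) 1 → y ∈ Set.Ioo (0 : ℝ) 1 →
      (∃ x' ∈ Set.Ioo (0 : ℝ) 1, payA a₁ a₂ x y < payA a₁ a₂ x' y) ∨
      (∃ y' ∈ Set.Ioo (0 : ℝ) 1, payB b₁ b₂ x y < payB b₁ b₂ x y') := by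
  have ha2 : (0:ℝ) < a₂ := by linarith
  have ha1 : (1:ℝ)/2 < a₁ := by linarith
  have hb1 : (1:ℝ)/2 < b₁ := by linarith
  intro x y hx hy
  obtain ⟨hx0, hx1⟩ := hx
  obtain ⟨hy0, hy1⟩ := hy
  rcases lt_trichotomy x y with hxy | hxy | hxy
  · -- x < y : Bob or Alice deviates
    have hyx : ¬ y ≤ x := not_le.mpr hxy
    rcases lt_trichotomy (x + y) 1 with hS | hS | hS
    · -- x + y < 1 : Bob moves to (x+y)/2
      right
      refine ⟨(x + y) / 2, ⟨by linarith, by linarith⟩, ?_⟩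
      rw [payB3 b₁ b₂ x y hyx hS.le,
          payB3 b₁ b₂ x ((x + y) / 2) (not_le.mpr (by linarith)) (by linarith)]
      have k : 1 / (2 - x - (x + y) / 2) < 1 / (2 - x - y) := by
        rw [div_lt_div_iff₀ (by linarith) (by linarith)]; linarith
      nlinarith [mul_lt_mul_of_pos_left k h₄]
    · -- x + y = 1 : Bob moves to (x+y)/2
      right
      refine ⟨(x + y) / 2, ⟨by linarith, by linarith⟩, ?_⟩
      rw [payB3 b₁ b₂ x y hyx hS.le,
          payB3 b₁ b₂ x ((x + y) / 2) (not_le.mpr (by linarith)) (by linarith)]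
      have e : 2 - x - y = 1 := by linarith
      rw [e]
      have k : 1 / (2 - x - (x + y) / 2) < 1 := by
        rw [div_lt_one (by linarith)]; linarith
      nlinarith [mul_pos h₄ (by linarith : (0:ℝ) < 1 - 1 / (2 - x - (x + y) / 2))]
    · -- x + y > 1 : Alice moves up to (x+y)/2
      left
      refine ⟨(x + y) / 2, ⟨by linarith, by linarith⟩, ?_⟩
      rw [payA4 a₁ a₂ x y hyx (not_le.mpr hS),
          payA4 a₁ a₂ ((x + y) / 2) y (not_le.mpr (by linarith)) (not_le.mpr (by linarith))]
      have k : (x + y - 1) / (x + y) < ((x + y) / 2 + y - 1) / ((x + y) / 2 + y) := by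
        rw [div_lt_div_iff₀ (by linarith) (by linarith)]; nlinarith
      nlinarith [mul_lt_mul_of_pos_left k (by linarith : (0:ℝ) < a₁)]
  · -- x = y
    subst hxy
    rcases lt_or_ge (x + x) 1 with h2 | h2
    · -- 2x < 1 : Bob moves to 1 - x
      right
      refine ⟨1 - x, ⟨by linarith, by linarith⟩, ?_⟩
      rw [payB2 b₁ b₂ x x le_rfl (not_le.mpr h2),
          payB3 b₁ b₂ x (1 - x) (not_le.mpr (by linarith)) (by linarith)]
      have e : 2 - x - (1 - x) = 1 := by ring
      rw [e]
      have k : (0:ℝ) ≤ (1 - x - x) / (2 - x - x) :=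
        div_nonneg (by linarith) (by linarith)
      nlinarith [mul_nonneg h₄.le k]
    · -- 2x ≥ 1
      rcases lt_or_ge x b₁ with hxb | hxb
      · -- x < b₁ : Bob moves up to x + δ
        right
        set δ : ℝ := min ((1 - x) / 2) (b₁ - x) with hδdef
        have hδ0 : 0 < δ := lt_min (by linarith) (by linarith)
        have hδ1 : δ ≤ (1 - x) / 2 := min_le_left _ _
        have hδ2 : δ ≤ b₁ - x := min_le_right _ _
        refine ⟨x + δ, ⟨by linarith, by linarith⟩, ?_⟩
        rw [payB1 b₁ b₂ x x le_rfl h2,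
            payB4 b₁ b₂ x (x + δ) (not_le.mpr (by linarith)) (not_le.mpr (by linarith))]
        have e1 : b₁ * (1 - 1 / (x + x)) + b₂ * (1 - 0)
            = ((b₁ + b₂) * (x + x) - b₁) / (x + x) := by
          field_simp; ring
        have e2 : b₁ * (1 - (x + (x + δ) - 1) / (x + (x + δ))) + b₂ * (1 - 1)
            = b₁ / (x + (x + δ)) := by
          field_simp; ring
        rw [e1, e2, div_lt_div_iff₀ (by linarith) (by linarith), hb]
        nlinarith [mul_nonneg (by linarith : (0:ℝ) ≤ b₁ - x - δ) hx0.le,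
          mul_pos (by linarith : (0:ℝ) < b₁ - x) hx0,
          mul_pos hδ0 (by linarith : (0:ℝ) < b₁)]
      · -- x ≥ b₁ : Alice moves down to x - δ
        left
        obtain ⟨δ, hδ0, hδ1, hδ2⟩ :
            ∃ δ : ℝ, 0 < δ ∧ δ ≤ (x + x - 1) / 2 ∧ δ ≤ (x - a₁) / 2 := by
          refine ⟨min ((x + x - 1) / 2) ((x - a₁) / 2), ?_, min_le_left _ _, min_le_right _ _⟩
          exact lt_min (by linarith) (by linarith)
        refine ⟨x - δ, ⟨by linarith, by linarith⟩, ?_⟩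
        rw [payA1 a₁ a₂ x x le_rfl h2,
            payA4 a₁ a₂ (x - δ) x (not_le.mpr (by linarith)) (not_le.mpr (by linarith))]
        have e1 : a₁ * (1 / (x + x)) + a₂ * 0 = a₁ / (x + x) := by ring
        have hne : x - δ + x ≠ 0 := by intro h; nlinarith
        have e2 : a₁ * ((x - δ + x - 1) / (x - δ + x)) + a₂ * 1
            = (a₁ * (x - δ + x - 1) + a₂ * (x - δ + x)) / (x - δ + x) := by
          field_simp
        rw [e1, e2, div_lt_div_iff₀ (by linarith) (by linarith)]
        have ha2e : a₂ = 1 - a₁ := by linarith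
        rw [ha2e]
        nlinarith [mul_nonneg (by linarith : (0:ℝ) ≤ (x - a₁) / 2 - δ) hx0.le,
          mul_pos hx0 (by linarith : (0:ℝ) < x - a₁),
          mul_pos (by linarith : (0:ℝ) < a₁) hδ0]
  · -- y < x : Alice deviates
    have hyx : y ≤ x := hxy.le
    rcases lt_trichotomy (x + y) 1 with hS | hS | hS
    · -- x + y < 1 : Alice moves down to (x+y)/2
      left
      refine ⟨(x + y) / 2, ⟨by linarith, by linarith⟩, ?_⟩
      rw [payA2 a₁ a₂ x y hyx (not_le.mpr hS),
          payA2 a₁ a₂ ((x + y) / 2) y (by linarith) (not_le.mpr (by linarith))]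
      have k : (1 - x - y) / (2 - x - y)
          < (1 - (x + y) / 2 - y) / (2 - (x + y) / 2 - y) := by
        rw [div_lt_div_iff₀ (by linarith) (by linarith)]; nlinarith
      nlinarith [mul_lt_mul_of_pos_left k ha2]
    · -- x + y = 1 : Alice moves down to (x+y)/2
      left
      refine ⟨(x + y) / 2, ⟨by linarith, by linarith⟩, ?_⟩
      rw [payA1 a₁ a₂ x y hyx hS.ge,
          payA2 a₁ a₂ ((x + y) / 2) y (by linarith) (not_le.mpr (by linarith))]
      have hq : 0 < (1 - (x + y) / 2 - y) / (2 - (x + y) / 2 - y) :=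
        div_pos (by linarith) (by linarith)
      have e : 1 / (x + y) = 1 := by rw [hS]; norm_num
      rw [e]
      nlinarith [mul_pos ha2 hq]
    · -- x + y > 1 : Alice moves down to (max y (1-y) + x)/2
      left
      have hm1 : max y (1 - y) < x := max_lt hxy (by linarith)
      have hm2 : y ≤ max y (1 - y) := le_max_left _ _
      have hm3 : 1 - y ≤ max y (1 - y) := le_max_right _ _
      refine ⟨(max y (1 - y) + x) / 2, ⟨by linarith, by linarith⟩, ?_⟩
      rw [payA1 a₁ a₂ x y hyx hS.le,
          payA1 a₁ a₂ ((max y (1 - y) + x) / 2) y (by linarith) (by linarith)]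
      have k : 1 / (x + y) < 1 / ((max y (1 - y) + x) / 2 + y) := by
        rw [div_lt_div_iff₀ (by linarith) (by linarith)]; linarith
      nlinarith [mul_lt_mul_of_pos_left k (by linarith : (0:ℝ) < a₁)]
end

section
/- For every pair of true valuation vectors (a, b) and every ε > 0, the continuous Adjusted Winner game with lexicographic tie-breaking admits an ε-Nash equilibrium, i.e., there exist valuation vectors x, y such that no unilateral deviation by either player increases that player's true utility by more than ε. -/
set_option maxHeartbeats 8000000


open Finset

/-- `IsAWLex x y w` holds iff `w` is the outcome of the Adjusted Winner procedure
with lexicographic tie-breaking on reports `(x, y)`: there is a permutation `π`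
sorting the items in decreasing order of ratio `x i / y i` (ties broken in favor
of the smaller item index), and a boundary `(l, λ)` with `λ ∈ [0,1)` equalizing
the reported utilities, such that Alice gets everything left of the boundary. -/
def IsAWLex {m : ℕ} (x y w : Fin m → ℝ) : Prop :=
  ∃ π : Equiv.Perm (Fin m),
    (∀ i j : Fin m, i < j →
      x (π j) * y (π i) < x (π i) * y (π j) ∨
      (x (π j) * y (π i) = x (π i) * y (π j) ∧ π i < π j)) ∧
    ∃ l : Fin m, ∃ lam : ℝ, 0 ≤ lam ∧ lam < 1 ∧
      ((∑ i ∈ Finset.univ.filter (· < l), x (π i)) + lam * x (π l)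
        = (1 - lam) * y (π l) + ∑ i ∈ Finset.univ.filter (l < ·), y (π i)) ∧
      (∀ i, i < l → w (π i) = 1) ∧ w (π l) = lam ∧ (∀ i, l < i → w (π i) = 0)

lemma sum_split_perm {m : ℕ} (l : Fin m) (f : Fin m → ℝ) :
    ∑ i, f i = (∑ i ∈ Finset.univ.filter (· < l), f i) + f l
      + ∑ i ∈ Finset.univ.filter (l < ·), f i := by
  rw [← Finset.sum_filter_add_sum_filter_not Finset.univ (· < l) f]
  have h : Finset.univ.filter (fun i => ¬ i < l) = insert l (Finset.univ.filter (l < ·)) := by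
    ext i
    simp only [Finset.mem_filter, Finset.mem_univ, true_and, Finset.mem_insert, not_lt]
    constructor
    · intro h
      rcases eq_or_lt_of_le h with h' | h'
      · exact Or.inl h'.symm
      · exact Or.inr h'
    · rintro (rfl | h')
      · exact le_refl _
      · exact le_of_lt h'
  rw [h, Finset.sum_insert (by simp)]
  ring

lemma key_lemma {m : ℕ} (x y w : Fin m → ℝ) (hx : IsValuation x) (hy : IsValuation y)
    (h : IsAWLex x y w) :
    (1/2 ≤ ∑ i, x i * w i) ∧ (∑ i, y i * w i ≤ 1/2) ∧ (∀ i, 0 ≤ w i ∧ w i ≤ 1) := by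
  obtain ⟨π, hord, l, lam, hl0, hl1, heq, hpre, hmid, hpost⟩ := h
  have hxp := hx.1
  have hyp := hy.1
  have halloc : ∀ i, 0 ≤ w i ∧ w i ≤ 1 := by
    intro i
    have hwi : w i = w (π (π.symm i)) := by rw [Equiv.apply_symm_apply]
    rcases lt_trichotomy (π.symm i) l with hc | hc | hc
    · rw [hwi, hpre _ hc]; norm_num
    · rw [hwi, hc, hmid]; exact ⟨hl0, le_of_lt hl1⟩
    · rw [hwi, hpost _ hc]; norm_num
  set P := (∑ i ∈ Finset.univ.filter (· < l), x (π i)) + lam * x (π l) with hP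
  set Q := (1 - lam) * x (π l) + ∑ i ∈ Finset.univ.filter (l < ·), x (π i) with hQ
  set R := (∑ i ∈ Finset.univ.filter (· < l), y (π i)) + lam * y (π l) with hR
  set T := (1 - lam) * y (π l) + ∑ i ∈ Finset.univ.filter (l < ·), y (π i) with hT
  have hxsum : ∑ i, x (π i) = 1 := by rw [Equiv.sum_comp π x]; exact hx.2
  have hysum : ∑ i, y (π i) = 1 := by rw [Equiv.sum_comp π y]; exact hy.2
  have hsplitx := sum_split_perm l (fun i => x (π i))
  have hsplity := sum_split_perm l (fun i => y (π i))
  have hPQ : P + Q = 1 := by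
    rw [hP, hQ]
    have e1 : lam * x (π l) + (1 - lam) * x (π l) = x (π l) := by ring
    linarith [hsplitx, hxsum]
  have hRT : R + T = 1 := by
    rw [hR, hT]
    linarith [hsplity, hysum]
  have hxw : ∑ i, x i * w i = P := by
    have hcomp : ∑ i, x i * w i = ∑ i, x (π i) * w (π i) :=
      (Equiv.sum_comp π (fun i => x i * w i)).symm
    rw [hcomp, sum_split_perm l (fun i => x (π i) * w (π i)), hmid]
    have h1 : ∑ i ∈ Finset.univ.filter (· < l), x (π i) * w (π i)
        = ∑ i ∈ Finset.univ.filter (· < l), x (π i) := by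
      apply Finset.sum_congr rfl
      intro i hi
      rw [hpre i (by simpa using hi)]; ring
    have h2 : ∑ i ∈ Finset.univ.filter (l < ·), x (π i) * w (π i) = 0 := by
      apply Finset.sum_eq_zero
      intro i hi
      rw [hpost i (by simpa using hi)]; ring
    rw [h1, h2, hP]; ring
  have hyw : ∑ i, y i * w i = R := by
    have hcomp : ∑ i, y i * w i = ∑ i, y (π i) * w (π i) :=
      (Equiv.sum_comp π (fun i => y i * w i)).symm
    rw [hcomp, sum_split_perm l (fun i => y (π i) * w (π i)), hmid]
    have h1 : ∑ i ∈ Finset.univ.filter (· < l), y (π i) * w (π i)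
        = ∑ i ∈ Finset.univ.filter (· < l), y (π i) := by
      apply Finset.sum_congr rfl
      intro i hi
      rw [hpre i (by simpa using hi)]; ring
    have h2 : ∑ i ∈ Finset.univ.filter (l < ·), y (π i) * w (π i) = 0 := by
      apply Finset.sum_eq_zero
      intro i hi
      rw [hpost i (by simpa using hi)]; ring
    rw [h1, h2, hR]; ring
  have hle : ∀ i j : Fin m, i < j → x (π j) * y (π i) ≤ x (π i) * y (π j) := by
    intro i j hij
    rcases hord i j hij with h | h
    · exact le_of_lt h
    · exact le_of_eq h.1
  have hPy : x (π l) * R ≤ P * y (π l) := by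
    rw [hP, hR]
    have hsum : x (π l) * ∑ i ∈ Finset.univ.filter (· < l), y (π i)
        ≤ (∑ i ∈ Finset.univ.filter (· < l), x (π i)) * y (π l) := by
      rw [Finset.mul_sum, Finset.sum_mul]
      apply Finset.sum_le_sum
      intro i hi
      exact hle i l (by simpa using hi)
    have e1 : x (π l) * ((∑ i ∈ Finset.univ.filter (· < l), y (π i)) + lam * y (π l))
        = x (π l) * (∑ i ∈ Finset.univ.filter (· < l), y (π i))
          + lam * (x (π l) * y (π l)) := by ring
    have e2 : ((∑ i ∈ Finset.univ.filter (· < l), x (π i)) + lam * x (π l)) * y (π l)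
        = (∑ i ∈ Finset.univ.filter (· < l), x (π i)) * y (π l)
          + lam * (x (π l) * y (π l)) := by ring
    rw [e1, e2]
    linarith [hsum]
  have hQy : Q * y (π l) ≤ x (π l) * T := by
    rw [hQ, hT]
    have hsum : (∑ i ∈ Finset.univ.filter (l < ·), x (π i)) * y (π l)
        ≤ x (π l) * ∑ i ∈ Finset.univ.filter (l < ·), y (π i) := by
      rw [Finset.mul_sum, Finset.sum_mul]
      apply Finset.sum_le_sum
      intro i hi
      exact hle l i (by simpa using hi)
    have e1 : ((1 - lam) * x (π l) + ∑ i ∈ Finset.univ.filter (l < ·), x (π i)) * y (π l)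
        = (1 - lam) * (x (π l) * y (π l))
          + (∑ i ∈ Finset.univ.filter (l < ·), x (π i)) * y (π l) := by ring
    have e2 : x (π l) * ((1 - lam) * y (π l) + ∑ i ∈ Finset.univ.filter (l < ·), y (π i))
        = (1 - lam) * (x (π l) * y (π l))
          + x (π l) * (∑ i ∈ Finset.univ.filter (l < ·), y (π i)) := by ring
    rw [e1, e2]
    linarith [hsum]
  have hP0 : 0 ≤ P := by
    rw [hP]
    have h0 : (0:ℝ) ≤ ∑ i ∈ Finset.univ.filter (· < l), x (π i) :=
      Finset.sum_nonneg fun i _ => le_of_lt (hxp _)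
    have h1 : (0:ℝ) ≤ lam * x (π l) := mul_nonneg hl0 (hxp _).le
    linarith
  have hQ0 : 0 ≤ Q := by
    rw [hQ]
    have h0 : (0:ℝ) ≤ ∑ i ∈ Finset.univ.filter (l < ·), x (π i) :=
      Finset.sum_nonneg fun i _ => le_of_lt (hxp _)
    have h1 : (0:ℝ) ≤ (1 - lam) * x (π l) := mul_nonneg (by linarith) (hxp _).le
    linarith
  have hR0 : 0 ≤ R := by
    rw [hR]
    have h0 : (0:ℝ) ≤ ∑ i ∈ Finset.univ.filter (· < l), y (π i) :=
      Finset.sum_nonneg fun i _ => le_of_lt (hyp _)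
    have h1 : (0:ℝ) ≤ lam * y (π l) := mul_nonneg hl0 (hyp _).le
    linarith
  have hT0 : 0 ≤ T := by
    rw [hT]
    have h0 : (0:ℝ) ≤ ∑ i ∈ Finset.univ.filter (l < ·), y (π i) :=
      Finset.sum_nonneg fun i _ => le_of_lt (hyp _)
    have h1 : (0:ℝ) ≤ (1 - lam) * y (π l) := mul_nonneg (by linarith) (hyp _).le
    linarith
  have hPT : P = T := heq
  have h1 : (x (π l) * R) * (Q * y (π l)) ≤ (P * y (π l)) * (x (π l) * T) :=
    mul_le_mul hPy hQy (mul_nonneg hQ0 (hyp _).le) (mul_nonneg hP0 (hyp _).le)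
  have hpos : 0 < x (π l) * y (π l) := mul_pos (hxp _) (hyp _)
  have l1 : (x (π l) * R) * (Q * y (π l)) = (x (π l) * y (π l)) * (R * Q) := by ring
  have l2 : (P * y (π l)) * (x (π l) * T) = (x (π l) * y (π l)) * (P * T) := by ring
  rw [l1, l2] at h1
  have h2 : R * Q ≤ P * T := le_of_mul_le_mul_left h1 hpos
  have hQval : Q = 1 - P := by linarith
  have hRval : R = 1 - P := by linarith
  rw [hQval, hRval, hPT] at h2
  have hPhalf : 1/2 ≤ T := by linarith [h2]
  constructor
  · rw [hxw, hPT]; exact hPhalf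
  constructor
  · rw [hyw, hRval, hPT]; linarith
  · exact halloc

/-- for every pair of true valuations `(a, b)` and every `ε > 0`,
the continuous Adjusted Winner game with lexicographic tie-breaking admits an
`ε`-Nash equilibrium. -/
theorem aw_continuous_epsilon_nash (m : ℕ) (hm : 1 ≤ m)
    (a b : Fin m → ℝ) (ha : IsValuation a) (hb : IsValuation b)
    (ε : ℝ) (hε : 0 < ε) :
    ∃ x y : Fin m → ℝ, IsValuation x ∧ IsValuation y ∧
      ∃ w : Fin m → ℝ, IsAWLex x y w ∧
        (∀ x' w' : Fin m → ℝ, IsValuation x' → IsAWLex x' y w' →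
          uA a w' ≤ uA a w + ε) ∧
        (∀ y' w' : Fin m → ℝ, IsValuation y' → IsAWLex x y' w' →
          uB b w' ≤ uB b w + ε) := by
  classical
  obtain ⟨hap, hasum⟩ := ha
  obtain ⟨hbp, hbsum⟩ := hb
  -- the midpoint valuation
  set z : Fin m → ℝ := fun j => (a j + b j) / 2 with hzdef
  have hz : ∀ j, 0 < z j := fun j => by
    simp only [hzdef]; have := hap j; have := hbp j; positivity
  have hzsum : ∑ j, z j = 1 := by
    simp only [hzdef]
    rw [← Finset.sum_div, Finset.sum_add_distrib, hasum, hbsum]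
    norm_num
  -- sorting permutation by increasing b/a ratio
  set σ : Equiv.Perm (Fin m) := Tuple.sort (fun i => b i / a i) with hσdef
  have hsort : ∀ i j : Fin m, i ≤ j → a (σ j) * b (σ i) ≤ a (σ i) * b (σ j) := by
    intro i j hij
    have hmono := Tuple.monotone_sort (fun i => b i / a i) hij
    simp only [Function.comp_apply] at hmono
    rw [div_le_div_iff₀ (hap _) (hap _)] at hmono
    rw [← hσdef] at hmono
    linarith [hmono]
  -- the tilt parameter
  set δ : ℝ := min (1/2) (ε/8) with hδdef
  have hδ0 : 0 < δ := lt_min (by norm_num) (by linarith)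
  have hδh : δ ≤ 1/2 := min_le_left _ _
  have hδe : δ ≤ ε/8 := min_le_right _ _
  have hm0 : (0:ℝ) < m := by exact_mod_cast hm
  -- strictly decreasing weights along the sorted order
  set u : Fin m → ℝ := fun p => ((m : ℝ) - (p : ℕ)) / m with hudef
  have hu_pos : ∀ p, 0 < u p := by
    intro p
    have : ((p : ℕ) : ℝ) < m := by exact_mod_cast p.isLt
    simp only [hudef]
    apply div_pos (by linarith) hm0
  have hu_le : ∀ p, u p ≤ 1 := by
    intro p
    have : (0:ℝ) ≤ ((p : ℕ) : ℝ) := by positivity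
    simp only [hudef]
    rw [div_le_one hm0]
    linarith
  have hu_strict : ∀ p q : Fin m, p < q → u q < u p := by
    intro p q hpq
    have : ((p : ℕ) : ℝ) < ((q : ℕ) : ℝ) := by exact_mod_cast hpq
    simp only [hudef]
    apply (div_lt_div_iff_of_pos_right hm0).mpr
    linarith
  set s : Fin m → ℝ := fun j => u (σ.symm j) with hsdef
  have hs0 : ∀ j, 0 < s j := fun j => hu_pos _
  have hs1 : ∀ j, s j ≤ 1 := fun j => hu_le _
  set T : ℝ := ∑ j, z j * s j with hTdef
  have hT0 : 0 ≤ T := Finset.sum_nonneg fun j _ => mul_nonneg (hz j).le (hs0 j).le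
  have hT1 : T ≤ 1 := by
    rw [hTdef, ← hzsum]
    apply Finset.sum_le_sum
    intro j _
    linarith [mul_nonneg (hz j).le (sub_nonneg.2 (hs1 j))]
  have hδT : δ * T ≤ 1/2 := by
    have h := mul_le_mul hδh hT1 hT0 (by norm_num : (0:ℝ) ≤ 1/2)
    linarith
  have hN : (0:ℝ) < 1 + δ * T := by linarith [mul_nonneg hδ0.le hT0]
  have hM : (0:ℝ) < 1 - δ * T := by linarith
  -- the reports
  set x : Fin m → ℝ := fun j => z j * (1 + δ * s j) / (1 + δ * T) with hxdef
  set y : Fin m → ℝ := fun j => z j * (1 - δ * s j) / (1 - δ * T) with hydef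
  have hδs : ∀ j, δ * s j ≤ 1/2 := by
    intro j
    have h := mul_le_mul hδh (hs1 j) (hs0 j).le (by norm_num : (0:ℝ) ≤ 1/2)
    linarith
  have hxp : ∀ j, 0 < x j := by
    intro j
    simp only [hxdef]
    have h1 : 0 < 1 + δ * s j := by linarith [mul_pos hδ0 (hs0 j)]
    exact div_pos (mul_pos (hz j) h1) hN
  have hyp : ∀ j, 0 < y j := by
    intro j
    simp only [hydef]
    have h1 : 0 < 1 - δ * s j := by linarith [hδs j]
    exact div_pos (mul_pos (hz j) h1) hM
  have hxsum : ∑ j, x j = 1 := by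
    simp only [hxdef]
    rw [← Finset.sum_div, div_eq_one_iff_eq hN.ne']
    have e : ∀ j : Fin m, z j * (1 + δ * s j) = z j + δ * (z j * s j) := fun j => by ring
    rw [Finset.sum_congr rfl (fun j _ => e j), Finset.sum_add_distrib, ← Finset.mul_sum,
      hzsum, ← hTdef]
  have hysum : ∑ j, y j = 1 := by
    simp only [hydef]
    rw [← Finset.sum_div, div_eq_one_iff_eq hM.ne']
    have e : ∀ j : Fin m, z j * (1 - δ * s j) = z j - δ * (z j * s j) := fun j => by ring
    rw [Finset.sum_congr rfl (fun j _ => e j), Finset.sum_sub_distrib, ← Finset.mul_sum,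
      hzsum, ← hTdef]
  have hxv : IsValuation x := ⟨hxp, hxsum⟩
  have hyv : IsValuation y := ⟨hyp, hysum⟩
  -- comparison facts between x, y, z
  have F1 : ∀ j, x j ≤ (1 + δ) * z j := by
    intro j
    simp only [hxdef]
    rw [div_le_iff₀ hN]
    linarith [mul_nonneg (mul_nonneg (hz j).le hδ0.le) hT0, mul_nonneg (mul_nonneg (hz j).le hδ0.le) (sub_nonneg.2 (hs1 j)), mul_nonneg (mul_nonneg (mul_nonneg (hz j).le hδ0.le) hδ0.le) hT0, mul_nonneg (mul_nonneg (hz j).le hδ0.le) (by linarith [hδs j] : (0:ℝ) ≤ 1 - 2*(δ*s j)), mul_nonneg (mul_nonneg (hz j).le hδ0.le) (sub_nonneg.2 hT1), mul_nonneg (mul_nonneg (hz j).le hδ0.le) (hs0 j).le, mul_nonneg (mul_nonneg (mul_nonneg (hz j).le hδ0.le) hδ0.le) (hs0 j).le, mul_nonneg (mul_nonneg (hz j).le hδ0.le) (by linarith [hδT] : (0:ℝ) ≤ 1 - 2*(δ*T))]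
  have F2 : ∀ j, z j ≤ (1 + 2*δ) * y j := by
    intro j
    simp only [hydef]
    rw [mul_div_assoc', le_div_iff₀ hM]
    linarith [mul_nonneg (mul_nonneg (hz j).le hδ0.le) hT0, mul_nonneg (mul_nonneg (hz j).le hδ0.le) (sub_nonneg.2 (hs1 j)), mul_nonneg (mul_nonneg (mul_nonneg (hz j).le hδ0.le) hδ0.le) hT0, mul_nonneg (mul_nonneg (hz j).le hδ0.le) (by linarith [hδs j] : (0:ℝ) ≤ 1 - 2*(δ*s j)), mul_nonneg (mul_nonneg (hz j).le hδ0.le) (sub_nonneg.2 hT1), mul_nonneg (mul_nonneg (hz j).le hδ0.le) (hs0 j).le, mul_nonneg (mul_nonneg (mul_nonneg (hz j).le hδ0.le) hδ0.le) (hs0 j).le, mul_nonneg (mul_nonneg (hz j).le hδ0.le) (by linarith [hδT] : (0:ℝ) ≤ 1 - 2*(δ*T))]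
  have F3 : ∀ j, z j ≤ (1 + δ) * x j := by
    intro j
    simp only [hxdef]
    rw [mul_div_assoc', le_div_iff₀ hN]
    linarith [mul_nonneg (mul_nonneg (hz j).le hδ0.le) hT0, mul_nonneg (mul_nonneg (hz j).le hδ0.le) (sub_nonneg.2 (hs1 j)), mul_nonneg (mul_nonneg (mul_nonneg (hz j).le hδ0.le) hδ0.le) hT0, mul_nonneg (mul_nonneg (hz j).le hδ0.le) (by linarith [hδs j] : (0:ℝ) ≤ 1 - 2*(δ*s j)), mul_nonneg (mul_nonneg (hz j).le hδ0.le) (sub_nonneg.2 hT1), mul_nonneg (mul_nonneg (hz j).le hδ0.le) (hs0 j).le, mul_nonneg (mul_nonneg (mul_nonneg (hz j).le hδ0.le) hδ0.le) (hs0 j).le, mul_nonneg (mul_nonneg (hz j).le hδ0.le) (by linarith [hδT] : (0:ℝ) ≤ 1 - 2*(δ*T))]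
  have F4 : ∀ j, y j ≤ (1 + 2*δ) * z j := by
    intro j
    simp only [hydef]
    rw [div_le_iff₀ hM]
    linarith [mul_nonneg (mul_nonneg (hz j).le hδ0.le) hT0, mul_nonneg (mul_nonneg (hz j).le hδ0.le) (sub_nonneg.2 (hs1 j)), mul_nonneg (mul_nonneg (mul_nonneg (hz j).le hδ0.le) hδ0.le) hT0, mul_nonneg (mul_nonneg (hz j).le hδ0.le) (by linarith [hδs j] : (0:ℝ) ≤ 1 - 2*(δ*s j)), mul_nonneg (mul_nonneg (hz j).le hδ0.le) (sub_nonneg.2 hT1), mul_nonneg (mul_nonneg (hz j).le hδ0.le) (hs0 j).le, mul_nonneg (mul_nonneg (mul_nonneg (hz j).le hδ0.le) hδ0.le) (hs0 j).le, mul_nonneg (mul_nonneg (hz j).le hδ0.le) (by linarith [hδT] : (0:ℝ) ≤ 1 - 2*(δ*T))]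
  -- strict ratio ordering along σ
  have hord : ∀ i j : Fin m, i < j → x (σ j) * y (σ i) < x (σ i) * y (σ j) := by
    intro i j hij
    have hu := hu_strict i j hij
    have hsi : s (σ i) = u i := by simp only [hsdef]; rw [Equiv.symm_apply_apply]
    have hsj : s (σ j) = u j := by simp only [hsdef]; rw [Equiv.symm_apply_apply]
    simp only [hxdef, hydef, hsi, hsj]
    rw [div_mul_div_comm, div_mul_div_comm, div_lt_div_iff_of_pos_right (by positivity)]
    have hzi := hz (σ i); have hzj := hz (σ j)
    linarith [mul_pos (mul_pos hzi hzj) (mul_pos hδ0 (sub_pos.2 hu))]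
  clear_value z σ u s T x y
  -- the boundary
  set AxF : Fin m → ℝ := fun k => ∑ i ∈ Finset.univ.filter (· < k), x (σ i) with hAxdef
  set ByF : Fin m → ℝ := fun k => ∑ i ∈ Finset.univ.filter (k < ·), y (σ i) with hBydef
  set H : Fin m → ℝ := fun k => AxF k - y (σ k) - ByF k with hHdef
  set F : Finset (Fin m) := Finset.univ.filter (fun k => H k ≤ 0) with hFdef
  have hz0 : (⟨0, hm⟩ : Fin m) ∈ F := by
    have hempty : Finset.univ.filter (· < (⟨0, hm⟩ : Fin m)) = (∅ : Finset (Fin m)) := by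
      ext i; simp [Fin.lt_def]
    have hAx0 : AxF ⟨0, hm⟩ = 0 := by simp only [hAxdef]; rw [hempty]; simp
    have hBy0 : 0 ≤ ByF ⟨0, hm⟩ :=
      Finset.sum_nonneg fun i _ => (hyp _).le
    simp only [hFdef, Finset.mem_filter, Finset.mem_univ, true_and, hHdef]
    have := hyp (σ ⟨0, hm⟩)
    linarith
  have hFne : F.Nonempty := ⟨_, hz0⟩
  set l : Fin m := F.max' hFne with hldef
  have hHl : H l ≤ 0 := by
    have := F.max'_mem hFne
    rw [← hldef] at this
    simp only [hFdef, Finset.mem_filter] at this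
    exact this.2
  have hAx0 : 0 ≤ AxF l := Finset.sum_nonneg fun i _ => (hxp _).le
  have hBy0 : 0 ≤ ByF l := Finset.sum_nonneg fun i _ => (hyp _).le
  have hneeded : 0 < AxF l + x (σ l) - ByF l := by
    by_cases hcase : (l : ℕ) + 1 < m
    · set l' : Fin m := ⟨(l : ℕ) + 1, hcase⟩ with hl'def
      have hll' : l < l' := by simp [Fin.lt_def, hl'def]
      have hl'notF : l' ∉ F := by
        intro hmem
        have := Finset.le_max' F l' hmem
        rw [← hldef] at this
        exact absurd hll' (not_lt.mpr this)
      have hHl' : 0 < H l' := by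
        simp only [hFdef, Finset.mem_filter, Finset.mem_univ, true_and] at hl'notF
        linarith [not_le.mp hl'notF]
      have hid1 : AxF l' = AxF l + x (σ l) := by
        simp only [hAxdef]
        have hins : Finset.univ.filter (· < l') = insert l (Finset.univ.filter (· < l)) := by
          ext i
          simp only [Finset.mem_filter, Finset.mem_univ, true_and, Finset.mem_insert,
            Fin.lt_def, Fin.ext_iff, hl'def]
          omega
        rw [hins, Finset.sum_insert (by simp)]
        ring
      have hid2 : ByF l = y (σ l') + ByF l' := by
        simp only [hBydef]
        have hins : Finset.univ.filter (l < ·) = insert l' (Finset.univ.filter (l' < ·)) := by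
          ext i
          simp only [Finset.mem_filter, Finset.mem_univ, true_and, Finset.mem_insert,
            Fin.lt_def, Fin.ext_iff, hl'def]
          omega
        rw [hins, Finset.sum_insert (by simp)]
      have hHl'val : H l' = AxF l' - y (σ l') - ByF l' := rfl
      rw [hHl'val, hid1] at hHl'
      linarith [hid2]
    · have hml : (l : ℕ) + 1 = m := by have := l.isLt; omega
      have hByempty : ByF l = 0 := by
        simp only [hBydef]
        have : Finset.univ.filter (l < ·) = (∅ : Finset (Fin m)) := by
          ext i
          simp only [Finset.mem_filter, Finset.mem_univ, true_and, Fin.lt_def,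
            Finset.notMem_empty, iff_false]
          have := i.isLt; omega
        rw [this]; simp
      rw [hByempty]
      have := hxp (σ l)
      linarith
  set lam : ℝ := (y (σ l) + ByF l - AxF l) / (x (σ l) + y (σ l)) with hlamdef
  have hden : 0 < x (σ l) + y (σ l) := by have := hxp (σ l); have := hyp (σ l); linarith
  have hlam0 : 0 ≤ lam := by
    apply div_nonneg _ hden.le
    simp only [hHdef] at hHl
    linarith
  have hlam1 : lam < 1 := by
    rw [hlamdef, div_lt_one hden]
    linarith
  have hcancel : lam * (x (σ l) + y (σ l)) = y (σ l) + ByF l - AxF l := by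
    rw [hlamdef]; field_simp
  have heq : AxF l + lam * x (σ l) = (1 - lam) * y (σ l) + ByF l := by linarith [hcancel]
  set w : Fin m → ℝ := fun j =>
    if σ.symm j < l then (1:ℝ) else if σ.symm j = l then lam else 0 with hwdef
  have hw_pre : ∀ i, i < l → w (σ i) = 1 := by
    intro i hi
    simp [hwdef, hi]
  have hw_mid : w (σ l) = lam := by
    simp [hwdef]
  have hw_post : ∀ i, l < i → w (σ i) = 0 := by
    intro i hi
    simp [hwdef, asymm hi, ne_of_gt hi]
  have hAW : IsAWLex x y w :=
    ⟨σ, fun i j hij => Or.inl (hord i j hij), l, lam, hlam0, hlam1, heq, hw_pre, hw_mid, hw_post⟩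
  clear_value AxF ByF H F l lam w
  have hkey := key_lemma x y w hxv hyv hAW
  obtain ⟨hPhalf, hRhalf, hWalloc⟩ := hkey
  -- z-budget facts for the equilibrium outcome
  have hzw_le1 : ∑ i, z i * w i ≤ 1 := by
    rw [← hzsum]
    apply Finset.sum_le_sum
    intro i _
    linarith [mul_nonneg (hz i).le (sub_nonneg.2 (hWalloc i).2), mul_nonneg (hz i).le (hWalloc i).1]
  have hzw_ge : 1/2 - δ ≤ ∑ i, z i * w i := by
    have hxz : ∑ i, x i * w i ≤ ∑ i, ((1+δ) * z i) * w i := by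
      apply Finset.sum_le_sum
      intro i _
      exact mul_le_mul_of_nonneg_right (F1 i) (hWalloc i).1
    have e : ∑ i, ((1+δ)*z i) * w i = (1+δ) * ∑ i, z i * w i := by
      rw [Finset.mul_sum]
      apply Finset.sum_congr rfl
      intro i _
      ring
    rw [e] at hxz
    linarith [mul_le_mul_of_nonneg_left hzw_le1 hδ0.le]
  have hzwc_le1 : ∑ i, z i * (1 - w i) ≤ 1 := by
    have h : ∑ i, z i * (1 - w i) ≤ ∑ i, z i := by
      apply Finset.sum_le_sum
      intro i _
      linarith [mul_nonneg (hz i).le (sub_nonneg.2 (hWalloc i).2), mul_nonneg (hz i).le (hWalloc i).1]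
    linarith [h, le_of_eq hzsum]
  have hywc : 1/2 ≤ ∑ i, y i * (1 - w i) := by
    have e : ∑ i, y i * (1 - w i) = (∑ i, y i) - ∑ i, y i * w i := by
      rw [← Finset.sum_sub_distrib]
      apply Finset.sum_congr rfl
      intro i _
      ring
    rw [e, hysum]
    linarith
  have hzwc_ge : 1/2 - 2*δ ≤ ∑ i, z i * (1 - w i) := by
    have hyz : ∑ i, y i * (1 - w i) ≤ ∑ i, ((1+2*δ) * z i) * (1 - w i) := by
      apply Finset.sum_le_sum
      intro i _
      have h1 : 0 ≤ 1 - w i := by linarith [(hWalloc i).2]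
      exact mul_le_mul_of_nonneg_right (F4 i) h1
    have e : ∑ i, ((1+2*δ)*z i) * (1 - w i) = (1+2*δ) * ∑ i, z i * (1 - w i) := by
      rw [Finset.mul_sum]
      apply Finset.sum_congr rfl
      intro i _
      ring
    rw [e] at hyz
    linarith [mul_le_mul_of_nonneg_left hzwc_le1 hδ0.le]
  -- Alice's deviation bound
  have devA : ∀ x' w' : Fin m → ℝ, IsValuation x' → IsAWLex x' y w' → uA a w' ≤ uA a w + ε := by
    intro x' w' hx' hAW'
    obtain ⟨hP', hR', hW'⟩ := key_lemma x' y w' hx' hyv hAW'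
    set r : ℝ := a (σ l) / z (σ l) with hrdef
    have hr0 : 0 ≤ r := div_nonneg (hap _).le (hz _).le
    have hr2 : r ≤ 2 := by
      rw [hrdef, div_le_iff₀ (hz _)]
      have := hbp (σ l)
      simp only [hzdef]
      linarith
    have hzw' : ∑ i, z i * w' i ≤ 1/2 + δ := by
      have h1 : ∑ i, z i * w' i ≤ ∑ i, ((1+2*δ) * y i) * w' i := by
        apply Finset.sum_le_sum
        intro i _
        exact mul_le_mul_of_nonneg_right (F2 i) (hW' i).1
      have e : ∑ i, ((1+2*δ)*y i) * w' i = (1+2*δ) * ∑ i, y i * w' i := by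
        rw [Finset.mul_sum]
        apply Finset.sum_congr rfl
        intro i _
        ring
      rw [e] at h1
      have h2 : (1+2*δ) * ∑ i, y i * w' i ≤ (1+2*δ) * (1/2) :=
        mul_le_mul_of_nonneg_left hR' (by linarith)
      linarith
    have hterm : ∀ i : Fin m, (a i - r * z i) * w' i ≤ (a i - r * z i) * w i := by
      intro i
      have hi : σ (σ.symm i) = i := Equiv.apply_symm_apply σ i
      rcases lt_trichotomy (σ.symm i) l with hc | hc | hc
      · have hwi : w i = 1 := by rw [← hi]; exact hw_pre _ hc
        have hs := hsort (σ.symm i) l hc.le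
        rw [hi] at hs
        have hcoef : 0 ≤ a i - r * z i := by
          rw [hrdef, sub_nonneg, div_mul_eq_mul_div, div_le_iff₀ (hz _)]
          simp only [hzdef]
          linarith [hs]
        rw [hwi]
        exact mul_le_mul_of_nonneg_left (hW' i).2 hcoef
      · have hil : i = σ l := by rw [← hi, hc]
        have hcoef : a i - r * z i = 0 := by
          rw [hil, hrdef, div_mul_cancel₀ _ (hz (σ l)).ne']
          ring
        rw [hcoef]
        simp
      · have hwi : w i = 0 := by rw [← hi]; exact hw_post _ hc
        have hs := hsort l (σ.symm i) hc.le
        rw [hi] at hs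
        have hcoef : a i - r * z i ≤ 0 := by
          rw [hrdef, sub_nonpos, div_mul_eq_mul_div, le_div_iff₀ (hz _)]
          simp only [hzdef]
          linarith [hs]
        rw [hwi, mul_zero]
        exact mul_nonpos_of_nonpos_of_nonneg hcoef (hW' i).1
    have hsum_le : ∑ i, (a i - r * z i) * w' i ≤ ∑ i, (a i - r * z i) * w i :=
      Finset.sum_le_sum fun i _ => hterm i
    have e1 : uA a w' = (∑ i, (a i - r * z i) * w' i) + r * ∑ i, z i * w' i := by
      simp only [uA]
      rw [Finset.mul_sum, ← Finset.sum_add_distrib]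
      apply Finset.sum_congr rfl
      intro i _
      ring
    have e2 : uA a w = (∑ i, (a i - r * z i) * w i) + r * ∑ i, z i * w i := by
      simp only [uA]
      rw [Finset.mul_sum, ← Finset.sum_add_distrib]
      apply Finset.sum_congr rfl
      intro i _
      ring
    have h1 : (∑ i, z i * w' i) - (∑ i, z i * w i) ≤ 2*δ := by linarith
    have h2 : r * ((∑ i, z i * w' i) - (∑ i, z i * w i)) ≤ r * (2*δ) :=
      mul_le_mul_of_nonneg_left h1 hr0
    have h3 : r * (2*δ) ≤ 2 * (2*δ) := mul_le_mul_of_nonneg_right hr2 (by linarith)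
    have h4 : r * (∑ i, z i * w' i) - r * (∑ i, z i * w i) ≤ 4*δ := by linarith [h2, h3]
    rw [e1, e2]
    linarith
  -- Bob's deviation bound
  have devB : ∀ y' w' : Fin m → ℝ, IsValuation y' → IsAWLex x y' w' → uB b w' ≤ uB b w + ε := by
    intro y' w' hy' hAW'
    obtain ⟨hP', hR', hW'⟩ := key_lemma x y' w' hxv hy' hAW'
    set r : ℝ := b (σ l) / z (σ l) with hrdef
    have hr0 : 0 ≤ r := div_nonneg (hbp _).le (hz _).le
    have hr2 : r ≤ 2 := by
      rw [hrdef, div_le_iff₀ (hz _)]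
      have := hap (σ l)
      simp only [hzdef]
      linarith
    have hxw'c : ∑ i, x i * (1 - w' i) ≤ 1/2 := by
      have e : ∑ i, x i * (1 - w' i) = (∑ i, x i) - ∑ i, x i * w' i := by
        rw [← Finset.sum_sub_distrib]
        apply Finset.sum_congr rfl
        intro i _
        ring
      rw [e, hxsum]
      linarith
    have hzw'c : ∑ i, z i * (1 - w' i) ≤ 1/2 + δ := by
      have h1 : ∑ i, z i * (1 - w' i) ≤ ∑ i, ((1+δ) * x i) * (1 - w' i) := by
        apply Finset.sum_le_sum
        intro i _
        have hnn : 0 ≤ 1 - w' i := by linarith [(hW' i).2]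
        exact mul_le_mul_of_nonneg_right (F3 i) hnn
      have e : ∑ i, ((1+δ)*x i) * (1 - w' i) = (1+δ) * ∑ i, x i * (1 - w' i) := by
        rw [Finset.mul_sum]
        apply Finset.sum_congr rfl
        intro i _
        ring
      rw [e] at h1
      have hnn2 : 0 ≤ ∑ i, x i * (1 - w' i) :=
        Finset.sum_nonneg fun i _ => mul_nonneg (hxp i).le (by linarith [(hW' i).2])
      linarith [h1, mul_le_mul_of_nonneg_left hxw'c hδ0.le]
    have hterm : ∀ i : Fin m,
        (b i - r * z i) * (1 - w' i) ≤ (b i - r * z i) * (1 - w i) := by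
      intro i
      have hi : σ (σ.symm i) = i := Equiv.apply_symm_apply σ i
      rcases lt_trichotomy (σ.symm i) l with hc | hc | hc
      · have hwi : w i = 1 := by rw [← hi]; exact hw_pre _ hc
        have hs := hsort (σ.symm i) l hc.le
        rw [hi] at hs
        have hcoef : b i - r * z i ≤ 0 := by
          rw [hrdef, sub_nonpos, div_mul_eq_mul_div, le_div_iff₀ (hz _)]
          simp only [hzdef]
          linarith [hs]
        rw [hwi]
        have hnn : 0 ≤ 1 - w' i := by linarith [(hW' i).2]
        linarith [mul_nonneg hnn (neg_nonneg.2 hcoef)]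
      · have hil : i = σ l := by rw [← hi, hc]
        have hcoef : b i - r * z i = 0 := by
          rw [hil, hrdef, div_mul_cancel₀ _ (hz (σ l)).ne']
          ring
        rw [hcoef]
        simp
      · have hwi : w i = 0 := by rw [← hi]; exact hw_post _ hc
        have hs := hsort l (σ.symm i) hc.le
        rw [hi] at hs
        have hcoef : 0 ≤ b i - r * z i := by
          rw [hrdef, sub_nonneg, div_mul_eq_mul_div, div_le_iff₀ (hz _)]
          simp only [hzdef]
          linarith [hs]
        rw [hwi]
        have h1w : 1 - w' i ≤ 1 - 0 := by linarith [(hW' i).1]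
        have := mul_le_mul_of_nonneg_left h1w hcoef
        linarith [this]
    have hsum_le : ∑ i, (b i - r * z i) * (1 - w' i) ≤ ∑ i, (b i - r * z i) * (1 - w i) :=
      Finset.sum_le_sum fun i _ => hterm i
    have e1 : uB b w' = (∑ i, (b i - r * z i) * (1 - w' i)) + r * ∑ i, z i * (1 - w' i) := by
      simp only [uB]
      rw [Finset.mul_sum, ← Finset.sum_add_distrib]
      apply Finset.sum_congr rfl
      intro i _
      ring
    have e2 : uB b w = (∑ i, (b i - r * z i) * (1 - w i)) + r * ∑ i, z i * (1 - w i) := by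
      simp only [uB]
      rw [Finset.mul_sum, ← Finset.sum_add_distrib]
      apply Finset.sum_congr rfl
      intro i _
      ring
    have h1 : (∑ i, z i * (1 - w' i)) - (∑ i, z i * (1 - w i)) ≤ 3*δ := by linarith
    have h2 : r * ((∑ i, z i * (1 - w' i)) - (∑ i, z i * (1 - w i))) ≤ r * (3*δ) :=
      mul_le_mul_of_nonneg_left h1 hr0
    have h3 : r * (3*δ) ≤ 2 * (3*δ) := mul_le_mul_of_nonneg_right hr2 (by linarith)
    have h4 : r * (∑ i, z i * (1 - w' i)) - r * (∑ i, z i * (1 - w i)) ≤ 6*δ := by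
      linarith [h2, h3]
    rw [e1, e2]
    linarith
  exact ⟨x, y, hxv, hyv, w, hAW, devA, devB⟩
end

section
/- In the continuous Adjusted Winner game with informed tie-breaking (for any selection function F), the profile (a, a) in which both players report Alice's true valuation is a pure Nash equilibrium: u_a(F(x', a)) ≤ u_a(F(a, a)) for every valuation vector x', and u_b(F(a, y')) ≤ u_b(F(a, a)) for every valuation vector y'. -/
open Finset

/-- Equitability with respect to the reports `(x, y)`. -/
def EquitableRep {m : ℕ} (x y w : Fin m → ℝ) : Prop :=
  (∑ i, x i * w i) = ∑ i, y i * (1 - w i)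

/-- `F` is a selection function for Adjusted Winner with informed tie-breaking
(in favor of Bob, whose true valuation is `b`): on every report profile `(x, y)`
it outputs an allocation that is ordered and equitable with respect to the
reports and maximizes Bob's true utility among all such allocations. -/
def IsInformedSelection {m : ℕ} (b : Fin m → ℝ)
    (F : (Fin m → ℝ) → (Fin m → ℝ) → (Fin m → ℝ)) : Prop :=
  ∀ x y : Fin m → ℝ, IsValuation x → IsValuation y →
    IsAlloc (F x y) ∧ Ordered x y (F x y) ∧ EquitableRep x y (F x y) ∧
      ∀ w : Fin m → ℝ, IsAlloc w → Ordered x y w → EquitableRep x y w →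
        uB b w ≤ uB b (F x y)


private lemma aw_key1 {m : ℕ} {x y w : Fin m → ℝ} (hx : ∀ i, 0 < x i) (hy : ∀ i, 0 < y i)
    (hOrd : Ordered x y w) :
    ∃ r : ℝ, 0 ≤ r ∧ ∀ v : Fin m → ℝ, IsAlloc v →
      (∑ i, x i * v i) + r * (∑ i, y i * (1 - v i)) ≤
      (∑ i, x i * w i) + r * (∑ i, y i * (1 - w i)) := by
  obtain ⟨π, hsort, l, lam, hlam0, hlam1, hpre, hl, hpost⟩ := hOrd
  refine ⟨x (π l) / y (π l), div_nonneg (hx _).le (hy _).le, ?_⟩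
  intro v hv
  set r := x (π l) / y (π l) with hrdef
  have hry : r * y (π l) = x (π l) := div_mul_cancel₀ _ (ne_of_gt (hy _))
  have h1 : ∀ (u : Fin m → ℝ), (∑ i, x i * u i) + r * (∑ i, y i * (1 - u i))
      = ∑ i, (x (π i) * u (π i) + r * (y (π i) * (1 - u (π i)))) := by
    intro u
    rw [Finset.mul_sum, ← Finset.sum_add_distrib]
    exact (Equiv.sum_comp π (fun j => x j * u j + r * (y j * (1 - u j)))).symm
  rw [h1 v, h1 w]
  apply Finset.sum_le_sum
  intro i _
  have hv0 := (hv (π i)).1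
  have hv1 := (hv (π i)).2
  rcases lt_trichotomy i l with h | h | h
  · have hw1 := hpre i h
    have hc : r * y (π i) ≤ x (π i) := by
      have hs := hsort i l h
      rw [hrdef, div_mul_eq_mul_div, div_le_iff₀ (hy _)]
      linarith [hs]
    rw [hw1]
    nlinarith [mul_nonneg (sub_nonneg.2 hc) (sub_nonneg.2 hv1)]
  · subst h
    rw [hl]
    nlinarith [hry, sq_nonneg (v (π i) - lam)]
  · have hw0 := hpost i h
    have hc : x (π i) ≤ r * y (π i) := by
      have hs := hsort l i h
      rw [hrdef, div_mul_eq_mul_div, le_div_iff₀ (hy _)]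
      linarith [hs]
    rw [hw0]
    nlinarith [mul_nonneg hv0 (sub_nonneg.2 hc)]

private lemma aw_key2 {m : ℕ} (hm : 1 ≤ m) {a b : Fin m → ℝ} (ha : IsValuation a)
    (hb : ∀ i, 0 < b i) :
    ∃ w : Fin m → ℝ, IsAlloc w ∧ Ordered a a w ∧ (∑ i, a i * w i) = 1/2 ∧
      ∀ v : Fin m → ℝ, IsAlloc v → 1/2 ≤ ∑ i, a i * v i →
        (∑ i, b i * (1 - v i)) ≤ ∑ i, b i * (1 - w i) := by
  classical
  set σ : Equiv.Perm (Fin m) := Tuple.sort (fun i => b i / a i) with hσdef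
  have hmono : Monotone ((fun i => b i / a i) ∘ σ) := Tuple.monotone_sort _
  have cross : ∀ i j : Fin m, i ≤ j → b (σ i) * a (σ j) ≤ b (σ j) * a (σ i) := by
    intro i j hij
    have := hmono hij
    simp only [Function.comp_apply] at this
    rw [div_le_div_iff₀ (ha.1 _) (ha.1 _)] at this
    exact this
  set g : ℕ → ℝ := fun k => ∑ i ∈ Finset.univ.filter (fun i : Fin m => (i : ℕ) < k), a (σ i)
    with hgdef
  have hg0 : g 0 = 0 := by simp [hgdef]
  have hgm : g m = 1 := by
    have : Finset.univ.filter (fun i : Fin m => (i : ℕ) < m) = Finset.univ := by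
      apply Finset.filter_true_of_mem; intro i _; exact i.isLt
    rw [hgdef]; simp only [this]
    rw [Equiv.sum_comp σ a]; exact ha.2
  have hgsucc : ∀ l : Fin m, g ((l : ℕ) + 1) = g (l : ℕ) + a (σ l) := by
    intro l
    have hins : Finset.univ.filter (fun i : Fin m => (i : ℕ) < (l : ℕ) + 1)
        = insert l (Finset.univ.filter (fun i : Fin m => (i : ℕ) < (l : ℕ))) := by
      ext i
      simp only [Finset.mem_filter, Finset.mem_univ, true_and, Finset.mem_insert]
      constructor
      · intro h
        rcases Nat.lt_succ_iff_lt_or_eq.1 h with h | h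
        · exact Or.inr (by simpa using h)
        · exact Or.inl (Fin.ext h)
      · rintro (rfl | h)
        · omega
        · simp at h; omega
    rw [hgdef]
    simp only [hins]
    rw [Finset.sum_insert (by simp)]
    ring
  have hP : 1/2 ≤ g ((m - 1) + 1) := by
    have : m - 1 + 1 = m := by omega
    rw [this, hgm]; norm_num
  have hex : ∃ k, 1/2 ≤ g (k + 1) := ⟨m - 1, hP⟩
  set l' := Nat.find hex with hl'def
  have hup : 1/2 ≤ g (l' + 1) := Nat.find_spec hex
  have hl'le : l' ≤ m - 1 := Nat.find_le hP
  have hl'm : l' < m := by omega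
  set l : Fin m := ⟨l', hl'm⟩ with hldef
  have hlo : g l' ≤ 1/2 := by
    rcases Nat.eq_zero_or_pos l' with h | h
    · rw [h, hg0]; norm_num
    · have := Nat.find_min (⟨m - 1, hP⟩ : ∃ k, 1/2 ≤ g (k+1)) (show l' - 1 < l' by omega)
      rw [show l' - 1 + 1 = l' by omega] at this
      linarith [not_le.1 this]
  have hal : 0 < a (σ l) := ha.1 _
  set lam : ℝ := (1/2 - g l') / a (σ l) with hlamdef
  have hlam0 : 0 ≤ lam := div_nonneg (by linarith) hal.le
  have hlam1 : lam ≤ 1 := by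
    rw [hlamdef, div_le_one hal]
    have := hgsucc l
    simp only [hldef] at this
    linarith [hup, this]
  have hlam_mul : lam * a (σ l) = 1/2 - g l' := div_mul_cancel₀ _ (ne_of_gt hal)
  set val : Fin m → ℝ := fun i => if (i : ℕ) < l' then 1 else if i = l then lam else 0
    with hvaldef
  have hhalf : (∑ j, a j * val (σ.symm j)) = 1/2 := by
    have hre : (∑ j, a j * val (σ.symm j)) = ∑ i, a (σ i) * val i := by
      rw [← Equiv.sum_comp σ (fun j => a j * val (σ.symm j))]
      simp
    rw [hre]
    have hsplit : ∀ i : Fin m, a (σ i) * val i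
        = (if (i : ℕ) < l' then a (σ i) else 0) + (if i = l then a (σ i) * lam else 0) := by
      intro i
      simp only [hvaldef]
      rcases lt_trichotomy (i : ℕ) l' with h | h | h
      · have : i ≠ l := by
          intro hh
          have : (i : ℕ) = l' := by rw [hh, hldef]
          omega
        simp [h, this]
      · have : i = l := Fin.ext h
        simp [this, hldef, mul_comm]
      · have h1 : ¬ ((i : ℕ) < l') := by omega
        have h2 : i ≠ l := by
          intro hh
          have : (i : ℕ) = l' := by rw [hh, hldef]
          omega
        simp [h1, h2]
    rw [Finset.sum_congr rfl (fun i _ => hsplit i), Finset.sum_add_distrib]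
    rw [Finset.sum_ite_eq' Finset.univ l (fun i => a (σ i) * lam)]
    simp only [Finset.mem_univ, if_true]
    rw [← Finset.sum_filter]
    have : (∑ i ∈ Finset.univ.filter (fun i : Fin m => (i : ℕ) < l'), a (σ i)) = g l' := rfl
    rw [this]
    rw [mul_comm] at hlam_mul
    linarith [hlam_mul]
  have hone : ∀ u : Fin m → ℝ, (∑ j, a j * (1 - u j)) = 1 - ∑ j, a j * u j := by
    intro u
    have h : (∑ j, a j * (1 - u j)) = (∑ j, a j) - ∑ j, a j * u j := by
      rw [← Finset.sum_sub_distrib]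
      apply Finset.sum_congr rfl
      intro j _
      ring
    rw [h, ha.2]
  refine ⟨fun j => val (σ.symm j), ?_, ?_, hhalf, ?_⟩
  · intro j
    simp only [hvaldef]
    split_ifs
    · exact ⟨zero_le_one, le_refl 1⟩
    · exact ⟨hlam0, hlam1⟩
    · exact ⟨le_refl 0, zero_le_one⟩
  · refine ⟨σ, fun i j _ => le_of_eq (mul_comm _ _), l, lam, hlam0, hlam1, ?_, ?_, ?_⟩
    · intro i hi
      simp only [Equiv.symm_apply_apply, hvaldef]
      have : (i : ℕ) < l' := hi
      simp [this]
    · simp only [Equiv.symm_apply_apply, hvaldef]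
      simp [hldef]
    · intro i hi
      have h1 : ¬ ((i : ℕ) < l') := by
        have : (l' : ℕ) < (i : ℕ) := hi
        omega
      have h2 : i ≠ l := ne_of_gt hi
      simp only [Equiv.symm_apply_apply, hvaldef]
      simp [h1, h2]
  · intro v hv hvhalf
    set r : ℝ := b (σ l) / a (σ l) with hrdef
    have hr0 : 0 ≤ r := div_nonneg (hb _).le hal.le
    have hrb : r * a (σ l) = b (σ l) := div_mul_cancel₀ _ (ne_of_gt hal)
    have hpt : ∀ i : Fin m,
        b (σ i) * (1 - v (σ i)) - r * (a (σ i) * (1 - v (σ i)))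
        ≤ b (σ i) * (1 - val i) - r * (a (σ i) * (1 - val i)) := by
      intro i
      have hv0 := (hv (σ i)).1
      have hv1 := (hv (σ i)).2
      rcases lt_trichotomy (i : ℕ) l' with h | h | h
      · have hil : i ≤ l := by
          rw [hldef]; exact le_of_lt (by exact h)
        have hc : b (σ i) ≤ r * a (σ i) := by
          rw [hrdef, div_mul_eq_mul_div, le_div_iff₀ hal]
          linarith [cross i l hil]
        have hval : val i = 1 := by simp [hvaldef, h]
        rw [hval]
        nlinarith [mul_nonneg (sub_nonneg.2 hc) (sub_nonneg.2 hv1)]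
      · have hieq : i = l := Fin.ext h
        have hval : val i = lam := by
          simp [hvaldef, hieq, hldef]
        rw [hval, hieq, show b (σ l) = r * a (σ l) from hrb.symm]
        have hz : ∀ t : ℝ, r * a (σ l) * (1 - t) - r * (a (σ l) * (1 - t)) = 0 := fun t => by
          ring
        rw [hz, hz]
      · have hli : l ≤ i := by
          rw [hldef]; exact le_of_lt (by exact h)
        have hc : r * a (σ i) ≤ b (σ i) := by
          rw [hrdef, div_mul_eq_mul_div, div_le_iff₀ hal]
          linarith [cross l i hli]
        have h1 : ¬ ((i : ℕ) < l') := by omega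
        have h2 : i ≠ l := by
          intro hh
          have : (i : ℕ) = l' := by rw [hh, hldef]
          omega
        have hval : val i = 0 := by simp [hvaldef, h1, h2]
        rw [hval]
        nlinarith [mul_nonneg hv0 (sub_nonneg.2 hc)]
    have hsum := Finset.sum_le_sum (fun i (_ : i ∈ Finset.univ) => hpt i)
    rw [Finset.sum_sub_distrib, Finset.sum_sub_distrib] at hsum
    have e1 : (∑ i, b (σ i) * (1 - v (σ i))) = ∑ j, b j * (1 - v j) :=
      Equiv.sum_comp σ (fun j => b j * (1 - v j))
    have e2 : (∑ i, a (σ i) * (1 - v (σ i))) = ∑ j, a j * (1 - v j) :=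
      Equiv.sum_comp σ (fun j => a j * (1 - v j))
    have e3 : (∑ i, b (σ i) * (1 - val i)) = ∑ j, b j * (1 - val (σ.symm j)) := by
      rw [← Equiv.sum_comp σ (fun j => b j * (1 - val (σ.symm j)))]
      simp
    have e4 : (∑ i, a (σ i) * (1 - val i)) = ∑ j, a j * (1 - val (σ.symm j)) := by
      rw [← Equiv.sum_comp σ (fun j => a j * (1 - val (σ.symm j)))]
      simp
    rw [← Finset.mul_sum, ← Finset.mul_sum, e1, e2, e3, e4] at hsum
    have hAv : (∑ j, a j * (1 - v j)) ≤ 1/2 := by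
      rw [hone v]; linarith
    have hAw : (∑ j, a j * (1 - val (σ.symm j))) = 1/2 := by
      rw [hone (fun j => val (σ.symm j)), hhalf]; norm_num
    rw [hAw] at hsum
    have hmul : r * (∑ j, a j * (1 - v j)) ≤ r * (1/2) :=
      mul_le_mul_of_nonneg_left hAv hr0
    linarith

/-- under informed tie-breaking (for any selection function `F`),
the profile `(a, a)` where both players report Alice's true valuation is a pure
Nash equilibrium of the continuous Adjusted Winner game. -/
theorem informed_truthful_profile_is_nash (m : ℕ) (hm : 1 ≤ m)
    (a b : Fin m → ℝ) (ha : IsValuation a) (hb : IsValuation b)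
    (F : (Fin m → ℝ) → (Fin m → ℝ) → (Fin m → ℝ))
    (hF : IsInformedSelection b F) :
    (∀ x' : Fin m → ℝ, IsValuation x' → uA a (F x' a) ≤ uA a (F a a)) ∧
    (∀ y' : Fin m → ℝ, IsValuation y' → uB b (F a y') ≤ uB b (F a a)) := by
  classical
  have hsplitA : ∀ w : Fin m → ℝ, (∑ i, a i * (1 - w i)) = 1 - ∑ i, a i * w i := by
    intro w
    have h : (∑ i, a i * (1 - w i)) = (∑ i, a i) - ∑ i, a i * w i := by
      rw [← Finset.sum_sub_distrib]
      apply Finset.sum_congr rfl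
      intro j _
      ring
    rw [h, ha.2]
  obtain ⟨hal0, hord0, heq0, hmax0⟩ := hF a a ha ha
  have hFaa : uA a (F a a) = 1/2 := by
    have h := heq0
    unfold EquitableRep at h
    rw [hsplitA] at h
    unfold uA
    linarith
  have halfalloc : IsAlloc (fun _ : Fin m => (1:ℝ)/2) := fun i => by norm_num
  constructor
  · intro x' hx'
    obtain ⟨hal, hord, heq, -⟩ := hF x' a hx' ha
    obtain ⟨r, hr, hkey⟩ := aw_key1 hx'.1 ha.1 hord
    have h1 := hkey _ halfalloc
    have hx'half : (∑ i, x' i * ((1:ℝ)/2)) = 1/2 := by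
      rw [← Finset.sum_mul, hx'.2]
      norm_num
    have hahalf : (∑ i, a i * (1 - (1:ℝ)/2)) = 1/2 := by
      have h12 : (1:ℝ) - 1/2 = 1/2 := by norm_num
      rw [h12, ← Finset.sum_mul, ha.2]
      norm_num
    rw [hx'half, hahalf, hsplitA] at h1
    unfold EquitableRep at heq
    rw [hsplitA] at heq
    rw [hFaa]
    unfold uA
    nlinarith [h1, hr, heq]
  · intro y' hy'
    obtain ⟨hal, hord, heq, -⟩ := hF a y' ha hy'
    obtain ⟨r, hr, hkey⟩ := aw_key1 ha.1 hy'.1 hord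
    have h1 := hkey _ halfalloc
    have hahalf' : (∑ i, a i * ((1:ℝ)/2)) = 1/2 := by
      rw [← Finset.sum_mul, ha.2]
      norm_num
    have hy'half : (∑ i, y' i * (1 - (1:ℝ)/2)) = 1/2 := by
      have h12 : (1:ℝ) - 1/2 = 1/2 := by norm_num
      rw [h12, ← Finset.sum_mul, hy'.2]
      norm_num
    rw [hahalf', hy'half] at h1
    unfold EquitableRep at heq
    have hge : 1/2 ≤ ∑ i, a i * (F a y') i := by
      nlinarith [h1, hr, heq]
    obtain ⟨ws, hwal, hword, hwhalf, hwopt⟩ := aw_key2 hm ha hb.1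
    have h2 := hwopt (F a y') hal hge
    have hweq : EquitableRep a a ws := by
      unfold EquitableRep
      rw [hsplitA, hwhalf]
      norm_num
    have h3 := hmax0 ws hwal hword hweq
    unfold uB at h3 ⊢
    linarith [h2, h3]
end

section
/- Let F be any mechanism mapping each pair of reported valuation vectors (x, y) to an allocation F(x, y), such that for all reports Σ_i x_i · F(x,y)_i ≥ 1/2 and Σ_i y_i · (1 − F(x,y)_i) ≥ 1/2 (the outcome is proportional, in particular envy-free, with respect to the reports). If a report profile (x, y) is a pure Nash equilibrium with respect to the true valuations (a, b) — i.e., u_a(F(x', y)) ≤ u_a(F(x, y)) for every valuation vector x' and u_b(F(x, y')) ≤ u_b(F(x, y)) for every valuation vector y' — then the allocation F(x, y) is envy-free with respect to (a, b). -/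
open Finset

/-- for any mechanism `F` whose outcomes are proportional with
respect to the reports, every pure Nash equilibrium with respect to the true
valuations `(a, b)` yields an allocation that is envy-free for `(a, b)`. -/
theorem nash_equilibria_are_envyFree (m : ℕ) (hm : 1 ≤ m)
    (a b : Fin m → ℝ) (ha : IsValuation a) (hb : IsValuation b)
    (F : (Fin m → ℝ) → (Fin m → ℝ) → (Fin m → ℝ))
    (hFalloc : ∀ x y : Fin m → ℝ, IsValuation x → IsValuation y → IsAlloc (F x y))
    (hFprop : ∀ x y : Fin m → ℝ, IsValuation x → IsValuation y →
      1 / 2 ≤ (∑ i, x i * F x y i) ∧ 1 / 2 ≤ (∑ i, y i * (1 - F x y i)))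
    (x y : Fin m → ℝ) (hx : IsValuation x) (hy : IsValuation y)
    (hNEA : ∀ x' : Fin m → ℝ, IsValuation x' → uA a (F x' y) ≤ uA a (F x y))
    (hNEB : ∀ y' : Fin m → ℝ, IsValuation y' → uB b (F x y') ≤ uB b (F x y)) :
    EnvyFree a b (F x y) := by
  have hA : (1:ℝ)/2 ≤ uA a (F x y) := by
    have h1 := (hFprop a y ha hy).1
    have h2 := hNEA a ha
    have : (∑ i, a i * F a y i) = uA a (F a y) := rfl
    linarith [h1, h2]
  have hB : (1:ℝ)/2 ≤ uB b (F x y) := by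
    have h1 := (hFprop x b hx hb).2
    have h2 := hNEB b hb
    have : (∑ i, b i * (1 - F x b i)) = uB b (F x b) := rfl
    linarith [h1, h2]
  simp only [uA, uB] at hA hB
  have ea : (∑ i, a i * (1 - F x y i)) = 1 - ∑ i, a i * F x y i := by
    simp [mul_sub, Finset.sum_sub_distrib, ha.2]
  have eb : (∑ i, b i * F x y i) = 1 - ∑ i, b i * (1 - F x y i) := by
    have : ∀ i, b i * F x y i = b i - b i * (1 - F x y i) := by intro i; ring
    simp [this, Finset.sum_sub_distrib, hb.2]
  constructor
  · rw [ea]; linarith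
  · rw [eb]; linarith
end

section
/- Consider the continuous Adjusted Winner game with informed tie-breaking and selection function F. If a profile (x, x), in which both players submit the same report x, is a pure Nash equilibrium with respect to the true valuations (a, b) (no unilateral deviation to any valuation vector strictly increases the deviator's true utility), then the allocation F(x, x) is Pareto optimal with respect to (a, b). -/
open Finset

section Aux
variable {m : ℕ}

lemma sum_mul_one_sub (x w : Fin m → ℝ) (hx : ∑ i, x i = 1) :
    ∑ i, x i * (1 - w i) = 1 - ∑ i, x i * w i := by
  simp [mul_sub, Finset.sum_sub_distrib, hx]

lemma ordered_prop {p q w : Fin m → ℝ} (h : Ordered p q w) :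
    ∀ i j : Fin m, w i < 1 → 0 < w j → p i * q j ≤ p j * q i := by
  obtain ⟨π, hπ, l, lam, -, -, h1, h2, h3⟩ := h
  intro i j hi hj
  have hsi : π (π.symm i) = i := π.apply_symm_apply i
  have hti : π (π.symm j) = j := π.apply_symm_apply j
  have hs : l ≤ π.symm i := by
    by_contra hs
    push_neg at hs
    have := h1 _ hs
    rw [hsi] at this
    linarith
  have ht : π.symm j ≤ l := by
    by_contra ht
    push_neg at ht
    have := h3 _ ht
    rw [hti] at this
    linarith
  rcases eq_or_lt_of_le (ht.trans hs) with he | hlt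
  · have hij : j = i := by rw [← hsi, ← hti, he]
    subst hij
    exact le_refl _
  · have := hπ _ _ hlt
    rw [hsi, hti] at this
    exact this

lemma sign_lemma {c w v : Fin m → ℝ}
    (hwA : IsAlloc w) (hvA : IsAlloc v)
    (hw : ∀ i j, w i < 1 → 0 < w j → c i ≤ c j)
    (hv : ∀ i j, i ≠ j → v i < 1 → 0 < v j → c i < c j) :
    (∀ i, w i ≤ v i) ∨ (∀ i, v i ≤ w i) := by
  by_contra hcon
  push_neg at hcon
  obtain ⟨⟨i, hi⟩, ⟨j, hj⟩⟩ := hcon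
  have hij : i ≠ j := fun h => by rw [h] at hi; linarith
  have h1 : c j ≤ c i := hw j i (lt_of_lt_of_le hj (hvA j).2) (lt_of_le_of_lt (hvA i).1 hi)
  have h2 : c i < c j := hv i j hij (lt_of_lt_of_le hi (hwA i).2) (lt_of_le_of_lt (hwA j).1 hj)
  linarith

lemma core_bound {x z w v : Fin m → ℝ}
    (hsign : (∀ i, w i ≤ v i) ∨ (∀ i, v i ≤ w i))
    (hxn : ∀ i, 0 ≤ x i) (hz : ∀ i, 0 ≤ z i)
    (hsum : ∑ i, z i * w i + ∑ i, x i * w i = 1)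
    (hv2 : ∑ i, x i * v i = 1 / 2) :
    ∑ i, x i * |w i - v i| ≤ |1 / 2 - ∑ i, z i * v i| := by
  have key : ∀ u : Fin m → ℝ, (∑ i, (x i + z i) * u i) = (∑ i, x i * u i) + ∑ i, z i * u i := by
    intro u
    rw [← Finset.sum_add_distrib]
    exact Finset.sum_congr rfl fun i _ => by ring
  rcases hsign with hs | hs
  · have e0 : ∑ i, x i * |w i - v i| = ∑ i, x i * (v i - w i) :=
      Finset.sum_congr rfl fun i _ => by rw [abs_of_nonpos (by linarith [hs i])]; ring
    have e1 : ∑ i, x i * (v i - w i) ≤ ∑ i, (x i + z i) * (v i - w i) :=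
      Finset.sum_le_sum fun i _ => by nlinarith [hz i, hs i]
    have e2 : ∑ i, (x i + z i) * (v i - w i) = (∑ i, z i * v i) - 1 / 2 := by
      have d1 : ∀ u : Fin m → ℝ, (∑ i, (x i + z i) * (v i - u i)) = (∑ i, (x i + z i) * v i) - ∑ i, (x i + z i) * u i := by
        intro u
        rw [← Finset.sum_sub_distrib]
        exact Finset.sum_congr rfl fun i _ => by ring
      rw [d1, key, key, hv2]
      linarith
    have := neg_le_abs (1 / 2 - ∑ i, z i * v i)
    rw [e0]
    linarith
  · have e0 : ∑ i, x i * |w i - v i| = ∑ i, x i * (w i - v i) :=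
      Finset.sum_congr rfl fun i _ => by rw [abs_of_nonneg (by linarith [hs i])]
    have e1 : ∑ i, x i * (w i - v i) ≤ ∑ i, (x i + z i) * (w i - v i) :=
      Finset.sum_le_sum fun i _ => by nlinarith [hz i, hs i]
    have e2 : ∑ i, (x i + z i) * (w i - v i) = 1 / 2 - ∑ i, z i * v i := by
      have d1 : (∑ i, (x i + z i) * (w i - v i)) = (∑ i, (x i + z i) * w i) - ∑ i, (x i + z i) * v i := by
        rw [← Finset.sum_sub_distrib]
        exact Finset.sum_congr rfl fun i _ => by ring
      rw [d1, key, key, hv2]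
      linarith
    have := le_abs_self (1 / 2 - ∑ i, z i * v i)
    rw [e0]
    linarith

end Aux
section Vertex
variable {m : ℕ}

lemma vertex_step (x φ : Fin m → ℝ) (hx : ∀ i, 0 < x i)
    (w : Fin m → ℝ) (hw : IsAlloc w) {i j : Fin m} (hij : i ≠ j)
    (hi : 0 < w i ∧ w i < 1) (hj : 0 < w j ∧ w j < 1)
    (hφ : φ j * x i ≤ φ i * x j) :
    ∃ w' : Fin m → ℝ, IsAlloc w' ∧
      (∑ k, x k * w' k) = (∑ k, x k * w k) ∧
      (∑ k, φ k * w k) ≤ (∑ k, φ k * w' k) ∧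
      (univ.filter fun k => 0 < w' k ∧ w' k < 1) ⊂ (univ.filter fun k => 0 < w k ∧ w k < 1) := by
  have hxi := hx i
  have hxj := hx j
  set t : ℝ := min ((1 - w i) / x j) (w j / x i) with ht
  have ht0 : 0 < t := lt_min (div_pos (by linarith [hi.2]) hxj) (div_pos hj.1 hxi)
  set w' : Fin m → ℝ :=
    fun k => w k + (if k = i then t * x j else 0) - (if k = j then t * x i else 0) with hw'
  have hw'i : w' i = w i + t * x j := by simp [hw', hij]
  have hw'j : w' j = w j - t * x i := by simp [hw', Ne.symm hij]
  have hw'k : ∀ k, k ≠ i → k ≠ j → w' k = w k := by intro k h1 h2; simp [hw', h1, h2]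
  have hi1 : w i + t * x j ≤ 1 := by
    have h := min_le_left ((1 - w i) / x j) (w j / x i)
    rw [← ht] at h
    have := (le_div_iff₀ hxj).mp h
    linarith
  have hj0 : 0 ≤ w j - t * x i := by
    have h := min_le_right ((1 - w i) / x j) (w j / x i)
    rw [← ht] at h
    have := (le_div_iff₀ hxi).mp h
    linarith
  have hsx : ∀ c : Fin m → ℝ,
      (∑ k, c k * w' k) = (∑ k, c k * w k) + c i * (t * x j) - c j * (t * x i) := by
    intro c
    have e : ∀ k, c k * w' k =
        c k * w k + (if k = i then c i * (t * x j) else 0) - (if k = j then c j * (t * x i) else 0) := by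
      intro k
      by_cases h1 : k = i
      · subst h1
        rw [hw'i]
        simp [hij]
        ring
      · by_cases h2 : k = j
        · subst h2
          rw [hw'j]
          simp [h1]
          ring
        · rw [hw'k k h1 h2]
          simp [h1, h2]
    rw [Finset.sum_congr rfl fun k _ => e k, Finset.sum_sub_distrib, Finset.sum_add_distrib,
      Finset.sum_ite_eq' univ i, Finset.sum_ite_eq' univ j]
    simp
  have hAlloc : IsAlloc w' := by
    intro k
    by_cases h1 : k = i
    · subst h1
      rw [hw'i]
      constructor
      · nlinarith [hi.1]
      · exact hi1
    · by_cases h2 : k = j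
      · subst h2
        rw [hw'j]
        constructor
        · exact hj0
        · nlinarith [hj.2]
      · rw [hw'k k h1 h2]; exact hw k
  refine ⟨w', hAlloc, ?_, ?_, ?_⟩
  · rw [hsx x]; ring
  · rw [hsx φ]; nlinarith
  · constructor
    · intro k hk
      simp only [Finset.mem_filter, Finset.mem_univ, true_and] at hk ⊢
      by_cases h1 : k = i
      · subst h1; exact hi
      · by_cases h2 : k = j
        · subst h2; exact hj
        · rwa [hw'k k h1 h2] at hk
    · intro hsub
      rcases min_cases ((1 - w i) / x j) (w j / x i) with ⟨he, -⟩ | ⟨he, -⟩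
      · have : w' i = 1 := by rw [hw'i, ← ht] at *; rw [he]; field_simp; ring
        have hmem : i ∈ univ.filter fun k => 0 < w k ∧ w k < 1 := by
          simp only [Finset.mem_filter, Finset.mem_univ, true_and]; exact hi
        have := hsub hmem
        simp only [Finset.mem_filter, Finset.mem_univ, true_and] at this
        rw [‹w' i = 1›] at this
        linarith [this.2]
      · have : w' j = 0 := by rw [hw'j, ← ht] at *; rw [he]; field_simp; ring
        have hmem : j ∈ univ.filter fun k => 0 < w k ∧ w k < 1 := by
          simp only [Finset.mem_filter, Finset.mem_univ, true_and]; exact hj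
        have := hsub hmem
        simp only [Finset.mem_filter, Finset.mem_univ, true_and] at this
        rw [‹w' j = 0›] at this
        linarith [this.1]

lemma minfrac_of_card_le_one (hm : 1 ≤ m) {w : Fin m → ℝ} (hw : IsAlloc w)
    (h1 : (univ.filter fun k => 0 < w k ∧ w k < 1).card ≤ 1) :
    MinimallyFractional w := by
  classical
  by_cases hne : (univ.filter fun k => 0 < w k ∧ w k < 1).Nonempty
  · refine ⟨hne.choose, ?_⟩
    intro i hi
    by_contra hcon
    push_neg at hcon
    have h01 : 0 < w i ∧ w i < 1 := by
      constructor
      · rcases eq_or_lt_of_le (hw i).1 with h | h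
        · exact absurd h.symm hcon.1
        · exact h
      · rcases eq_or_lt_of_le (hw i).2 with h | h
        · exact absurd h hcon.2
        · exact h
    have hmem : i ∈ univ.filter fun k => 0 < w k ∧ w k < 1 := by
      simp only [Finset.mem_filter, Finset.mem_univ, true_and]; exact h01
    exact hi (Finset.card_le_one.mp h1 i hmem hne.choose hne.choose_spec)
  · refine ⟨⟨0, hm⟩, ?_⟩
    intro i _
    by_contra hcon
    push_neg at hcon
    have h01 : 0 < w i ∧ w i < 1 := by
      constructor
      · rcases eq_or_lt_of_le (hw i).1 with h | h
        · exact absurd h.symm hcon.1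
        · exact h
      · rcases eq_or_lt_of_le (hw i).2 with h | h
        · exact absurd h hcon.2
        · exact h
    exact hne ⟨i, by simp only [Finset.mem_filter, Finset.mem_univ, true_and]; exact h01⟩

lemma vertex_lemma (hm : 1 ≤ m) (x : Fin m → ℝ) (hx : ∀ i, 0 < x i) (φ : Fin m → ℝ) :
    ∀ w : Fin m → ℝ, IsAlloc w →
      ∃ v, IsAlloc v ∧ MinimallyFractional v ∧ (∑ i, x i * v i) = (∑ i, x i * w i) ∧
        (∑ i, φ i * w i) ≤ ∑ i, φ i * v i := by
  suffices H : ∀ n : ℕ, ∀ w : Fin m → ℝ, IsAlloc w →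
      (univ.filter fun k => 0 < w k ∧ w k < 1).card ≤ n →
      ∃ v, IsAlloc v ∧ MinimallyFractional v ∧ (∑ i, x i * v i) = (∑ i, x i * w i) ∧
        (∑ i, φ i * w i) ≤ ∑ i, φ i * v i by
    intro w hw
    exact H _ w hw le_rfl
  intro n
  induction n with
  | zero =>
    intro w hw hc
    exact ⟨w, hw, minfrac_of_card_le_one hm hw (hc.trans (by norm_num)), rfl, le_rfl⟩
  | succ n ih =>
    intro w hw hc
    by_cases h1 : (univ.filter fun k => 0 < w k ∧ w k < 1).card ≤ 1
    · exact ⟨w, hw, minfrac_of_card_le_one hm hw h1, rfl, le_rfl⟩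
    · push_neg at h1
      obtain ⟨i, hi, j, hj, hij⟩ := Finset.one_lt_card.mp h1
      simp only [Finset.mem_filter, Finset.mem_univ, true_and] at hi hj
      have step : ∃ w' : Fin m → ℝ, IsAlloc w' ∧
          (∑ k, x k * w' k) = (∑ k, x k * w k) ∧
          (∑ k, φ k * w k) ≤ (∑ k, φ k * w' k) ∧
          (univ.filter fun k => 0 < w' k ∧ w' k < 1) ⊂ (univ.filter fun k => 0 < w k ∧ w k < 1) := by
        rcases le_total (φ j * x i) (φ i * x j) with h | h
        · exact vertex_step x φ hx w hw hij hi hj h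
        · exact vertex_step x φ hx w hw (Ne.symm hij) hj hi h
      obtain ⟨w', hA', hx', hφ', hss⟩ := step
      have hcard : (univ.filter fun k => 0 < w' k ∧ w' k < 1).card ≤ n := by
        have := Finset.card_lt_card hss
        omega
      obtain ⟨v, h1v, h2v, h3v, h4v⟩ := ih w' hA' hcard
      exact ⟨v, h1v, h2v, h3v.trans hx', hφ'.trans h4v⟩

end Vertex
section Dev
variable {m : ℕ}

lemma perturb_val (x e : Fin m → ℝ) (hx : IsValuation x)
    (he : ∀ i, 0 ≤ e i ∧ e i ≤ 1) (hE : ∑ i, x i * e i = 1 / 2)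
    (ε : ℝ) (hε : 0 < ε) :
    IsValuation (fun i => x i * (1 + ε * e i) / (1 + ε / 2)) := by
  have hZ : (0:ℝ) < 1 + ε / 2 := by linarith
  constructor
  · intro i
    apply div_pos _ hZ
    have h1 := hx.1 i
    have h2 : 0 ≤ ε * e i := mul_nonneg hε.le (he i).1
    nlinarith
  · rw [← Finset.sum_div]
    rw [div_eq_one_iff_eq (ne_of_gt hZ)]
    have : ∀ i, x i * (1 + ε * e i) = x i + ε * (x i * e i) := fun i => by ring
    rw [Finset.sum_congr rfl fun i _ => this i, Finset.sum_add_distrib, ← Finset.mul_sum, hx.2, hE]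
    ring

lemma zv_bound (x e v : Fin m → ℝ) (hx : IsValuation x)
    (he : ∀ i, 0 ≤ e i ∧ e i ≤ 1) (hE : ∑ i, x i * e i = 1 / 2)
    (hvA : IsAlloc v) (hv2 : ∑ i, x i * v i = 1 / 2)
    (ε : ℝ) (hε : 0 < ε) :
    |1 / 2 - ∑ i, (fun i => x i * (1 + ε * e i) / (1 + ε / 2)) i * v i| ≤ ε := by
  have hZ : (0:ℝ) < 1 + ε / 2 := by linarith
  set T : ℝ := ∑ i, x i * (e i * v i) with hT
  have hT0 : 0 ≤ T :=
    Finset.sum_nonneg fun i _ =>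
      mul_nonneg (hx.1 i).le (mul_nonneg (he i).1 (hvA i).1)
  have hT1 : T ≤ 1 / 2 := by
    rw [← hv2]
    refine Finset.sum_le_sum fun i _ => ?_
    nlinarith [mul_nonneg (mul_nonneg (hx.1 i).le (hvA i).1) (sub_nonneg.mpr (he i).2)]
  have hzv : ∑ i, (fun i => x i * (1 + ε * e i) / (1 + ε / 2)) i * v i
      = (1 / 2 + ε * T) / (1 + ε / 2) := by
    simp only []
    have h1 : ∀ i, x i * (1 + ε * e i) / (1 + ε / 2) * v i
        = (x i * v i + ε * (x i * (e i * v i))) / (1 + ε / 2) := fun i => by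
      field_simp
    rw [Finset.sum_congr rfl fun i _ => h1 i, ← Finset.sum_div, Finset.sum_add_distrib,
      ← Finset.mul_sum, hv2, ← hT]
  rw [hzv]
  have key : 1 / 2 - (1 / 2 + ε * T) / (1 + ε / 2) = ε * (1 / 4 - T) / (1 + ε / 2) := by
    field_simp
    ring
  rw [key, abs_div, abs_of_pos hZ, div_le_iff₀ hZ, abs_mul, abs_of_pos hε]
  have habs : |1 / 4 - T| ≤ 1 / 2 := abs_le.mpr ⟨by linarith, by linarith⟩
  nlinarith

lemma diff_le (φ x w v : Fin m → ℝ) (hφ0 : ∀ i, 0 < φ i) (hφ1 : ∑ i, φ i = 1)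
    (μ : ℝ) (hμ : 0 < μ) (hk : ∀ i, μ ≤ x i) (d : ℝ)
    (hd : ∑ i, x i * |w i - v i| ≤ d) :
    ∑ i, φ i * (v i - w i) ≤ d / μ := by
  have hφle : ∀ i, φ i ≤ 1 := fun i =>
    hφ1 ▸ Finset.single_le_sum (fun j _ => (hφ0 j).le) (Finset.mem_univ i)
  have hstep : ∀ i, φ i * (v i - w i) ≤ x i * |w i - v i| / μ := by
    intro i
    have e1 : v i - w i ≤ |w i - v i| := by rw [abs_sub_comm]; exact le_abs_self _
    have e2 : φ i * (v i - w i) ≤ |w i - v i| := by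
      nlinarith [abs_nonneg (w i - v i), (hφ0 i).le, hφle i]
    rw [le_div_iff₀ hμ]
    nlinarith [abs_nonneg (w i - v i), hk i]
  calc ∑ i, φ i * (v i - w i) ≤ ∑ i, x i * |w i - v i| / μ := Finset.sum_le_sum fun i _ => hstep i
    _ = (∑ i, x i * |w i - v i|) / μ := by rw [Finset.sum_div]
    _ ≤ d / μ := by gcongr

lemma vprop_strict {v : Fin m → ℝ} (hvA : IsAlloc v) {i₀ : Fin m}
    (hvf : ∀ i, i ≠ i₀ → v i = 0 ∨ v i = 1) :
    ∀ i j, i ≠ j → v i < 1 → 0 < v j → v i < v j := by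
  intro i j hij h1 h2
  rcases eq_or_ne i i₀ with rfl | hi0
  · rcases hvf j (fun h => hij h.symm) with h | h
    · rw [h] at h2; linarith
    · rw [h]; exact h1
  · rcases hvf i hi0 with h | h
    · rw [h]; exact h2
    · rw [h] at h1; linarith

end Dev
section DevMain
variable {m : ℕ}

lemma devA (hm : 1 ≤ m) (a b x : Fin m → ℝ) (ha : IsValuation a) (hx : IsValuation x)
    (F : (Fin m → ℝ) → (Fin m → ℝ) → (Fin m → ℝ)) (hF : IsInformedSelection b F)
    (hNEA : ∀ x' : Fin m → ℝ, IsValuation x' → uA a (F x' x) ≤ uA a (F x x))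
    (v : Fin m → ℝ) (hvA : IsAlloc v) (i₀ : Fin m) (hvf : ∀ i, i ≠ i₀ → v i = 0 ∨ v i = 1)
    (hv2 : ∑ i, x i * v i = 1 / 2) :
    uA a v ≤ uA a (F x x) := by
  obtain ⟨k0, -, hk0⟩ := Finset.exists_min_image Finset.univ x ⟨i₀, Finset.mem_univ _⟩
  set μ := x k0 with hμ
  have hμpos : 0 < μ := hx.1 k0
  have hvprop := vprop_strict hvA hvf
  have key : ∀ ε : ℝ, 0 < ε → uA a v ≤ uA a (F x x) + ε / μ := by
    intro ε hε
    have hZ : (0:ℝ) < 1 + ε / 2 := by linarith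
    set z : Fin m → ℝ := fun i => x i * (1 + ε * v i) / (1 + ε / 2) with hzdef
    have hzval : IsValuation z := perturb_val x v hx (fun i => hvA i) hv2 ε hε
    obtain ⟨hFa, hFo, hFe, -⟩ := hF z x hzval hx
    set w := F z x with hwdef
    have hwprop : ∀ i j, w i < 1 → 0 < w j → v i ≤ v j := by
      intro i j h1 h2
      have h3 := ordered_prop hFo i j h1 h2
      simp only [hzdef] at h3
      rw [div_mul_eq_mul_div, div_mul_eq_mul_div, div_le_div_iff₀ hZ hZ] at h3
      have h4 := le_of_mul_le_mul_right h3 hZ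
      nlinarith [mul_pos (mul_pos (hx.1 i) (hx.1 j)) hε, hx.1 i, hx.1 j]
    have hsign := sign_lemma hFa hvA hwprop hvprop
    have hsum : (∑ i, z i * w i) + ∑ i, x i * w i = 1 := by
      have hFe' : (∑ i, z i * w i) = ∑ i, x i * (1 - w i) := hFe
      rw [sum_mul_one_sub x w hx.2] at hFe'
      linarith
    have hcore := core_bound hsign (fun i => (hx.1 i).le) (fun i => (hzval.1 i).le) hsum hv2
    have hzv := zv_bound x v v hx (fun i => hvA i) hv2 hvA hv2 ε hε
    have hd : ∑ i, x i * |w i - v i| ≤ ε := le_trans hcore hzv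
    have hdiff := diff_le a x w v ha.1 ha.2 μ hμpos (fun i => hk0 i (Finset.mem_univ i)) ε hd
    have hexp : uA a v - uA a w = ∑ i, a i * (v i - w i) := by
      rw [uA, uA, ← Finset.sum_sub_distrib]
      exact Finset.sum_congr rfl fun i _ => by ring
    have hNE := hNEA z hzval
    rw [← hwdef] at hNE
    linarith
  by_contra hcon
  push_neg at hcon
  have hδ : 0 < (uA a v - uA a (F x x)) * μ / 2 := by
    apply div_pos _ two_pos
    exact mul_pos (by linarith) hμpos
  have hk := key _ hδ
  have : (uA a v - uA a (F x x)) * μ / 2 / μ = (uA a v - uA a (F x x)) / 2 := by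
    field_simp
  rw [this] at hk
  linarith

lemma devB (hm : 1 ≤ m) (b x : Fin m → ℝ) (hb : IsValuation b) (hx : IsValuation x)
    (F : (Fin m → ℝ) → (Fin m → ℝ) → (Fin m → ℝ)) (hF : IsInformedSelection b F)
    (hNEB : ∀ y' : Fin m → ℝ, IsValuation y' → uB b (F x y') ≤ uB b (F x x))
    (v : Fin m → ℝ) (hvA : IsAlloc v) (i₀ : Fin m) (hvf : ∀ i, i ≠ i₀ → v i = 0 ∨ v i = 1)
    (hv2 : ∑ i, x i * v i = 1 / 2) :
    uB b v ≤ uB b (F x x) := by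
  obtain ⟨k0, -, hk0⟩ := Finset.exists_min_image Finset.univ x ⟨i₀, Finset.mem_univ _⟩
  set μ := x k0 with hμ
  have hμpos : 0 < μ := hx.1 k0
  have hvprop := vprop_strict hvA hvf
  have he : ∀ i, 0 ≤ (fun i => 1 - v i) i ∧ (fun i => 1 - v i) i ≤ 1 := by
    intro i
    have := hvA i
    constructor <;> simp <;> linarith [this.1, this.2]
  have hE : ∑ i, x i * (1 - v i) = 1 / 2 := by
    rw [sum_mul_one_sub x v hx.2, hv2]
    norm_num
  have key : ∀ ε : ℝ, 0 < ε → uB b v ≤ uB b (F x x) + ε / μ := by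
    intro ε hε
    have hZ : (0:ℝ) < 1 + ε / 2 := by linarith
    set z : Fin m → ℝ := fun i => x i * (1 + ε * (1 - v i)) / (1 + ε / 2) with hzdef
    have hzval : IsValuation z := perturb_val x (fun i => 1 - v i) hx he hE ε hε
    obtain ⟨hFa, hFo, hFe, -⟩ := hF x z hx hzval
    set w := F x z with hwdef
    have hwprop : ∀ i j, w i < 1 → 0 < w j → v i ≤ v j := by
      intro i j h1 h2
      have h3 := ordered_prop hFo i j h1 h2
      simp only [hzdef] at h3
      rw [← mul_div_assoc, ← mul_div_assoc, div_le_div_iff₀ hZ hZ] at h3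
      have h4 := le_of_mul_le_mul_right h3 hZ
      nlinarith [mul_pos (mul_pos (hx.1 i) (hx.1 j)) hε, hx.1 i, hx.1 j]
    have hsign := sign_lemma hFa hvA hwprop hvprop
    have hsum : (∑ i, z i * w i) + ∑ i, x i * w i = 1 := by
      have hFe' : (∑ i, x i * w i) = ∑ i, z i * (1 - w i) := hFe
      rw [sum_mul_one_sub z w hzval.2] at hFe'
      linarith
    have hcore := core_bound hsign (fun i => (hx.1 i).le) (fun i => (hzval.1 i).le) hsum hv2
    have hzv := zv_bound x (fun i => 1 - v i) v hx he hE hvA hv2 ε hε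
    have hd : ∑ i, x i * |w i - v i| ≤ ε := le_trans hcore hzv
    have hd' : ∑ i, x i * |v i - w i| ≤ ε := by
      rw [Finset.sum_congr rfl fun i _ => by rw [abs_sub_comm (v i) (w i)]]
      exact hd
    have hdiff := diff_le b x v w hb.1 hb.2 μ hμpos (fun i => hk0 i (Finset.mem_univ i)) ε hd'
    have hexp : uB b v - uB b w = ∑ i, b i * (w i - v i) := by
      rw [uB, uB, ← Finset.sum_sub_distrib]
      exact Finset.sum_congr rfl fun i _ => by ring
    have hNE := hNEB z hzval
    rw [← hwdef] at hNE
    linarith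
  by_contra hcon
  push_neg at hcon
  have hδ : 0 < (uB b v - uB b (F x x)) * μ / 2 := by
    apply div_pos _ two_pos
    exact mul_pos (by linarith) hμpos
  have hk := key _ hδ
  have : (uB b v - uB b (F x x)) * μ / 2 / μ = (uB b v - uB b (F x x)) / 2 := by
    field_simp
  rw [this] at hk
  linarith

end DevMain

/-- in the continuous Adjusted Winner game with informed
tie-breaking, if a symmetric profile `(x, x)` is a pure Nash equilibrium with
respect to the true valuations `(a, b)`, then the resulting allocation
`F x x` is Pareto optimal with respect to `(a, b)`. -/
theorem informed_symmetric_nash_paretoOptimal (m : ℕ) (hm : 1 ≤ m)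
    (a b x : Fin m → ℝ) (ha : IsValuation a) (hb : IsValuation b)
    (hx : IsValuation x)
    (F : (Fin m → ℝ) → (Fin m → ℝ) → (Fin m → ℝ))
    (hF : IsInformedSelection b F)
    (hNEA : ∀ x' : Fin m → ℝ, IsValuation x' → uA a (F x' x) ≤ uA a (F x x))
    (hNEB : ∀ y' : Fin m → ℝ, IsValuation y' → uB b (F x y') ≤ uB b (F x x)) :
    ParetoOptimal a b (F x x) := by
  obtain ⟨hFa, hFo, hFe, -⟩ := hF x x hx hx
  have hw0 : ∑ i, x i * (F x x) i = 1 / 2 := by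
    have hFe' : (∑ i, x i * (F x x) i) = ∑ i, x i * (1 - (F x x) i) := hFe
    rw [sum_mul_one_sub x (F x x) hx.2] at hFe'
    linarith
  have factA : ∀ w : Fin m → ℝ, IsAlloc w → (∑ i, x i * w i) = 1 / 2 →
      uA a w ≤ uA a (F x x) := by
    intro w hwA hws
    obtain ⟨v, hvA, ⟨i₀, hvf⟩, hveq, hvge⟩ := vertex_lemma hm x hx.1 a w hwA
    have h2 : ∑ i, x i * v i = 1 / 2 := by rw [hveq, hws]
    have h3 := devA hm a b x ha hx F hF hNEA v hvA i₀ hvf h2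
    have h4 : uA a w ≤ uA a v := hvge
    linarith
  have factB : ∀ w : Fin m → ℝ, IsAlloc w → (∑ i, x i * w i) = 1 / 2 →
      uB b w ≤ uB b (F x x) := by
    intro w hwA hws
    obtain ⟨v, hvA, ⟨i₀, hvf⟩, hveq, hvge⟩ := vertex_lemma hm x hx.1 (fun i => -(b i)) w hwA
    have h2 : ∑ i, x i * v i = 1 / 2 := by rw [hveq, hws]
    have h3 := devB hm b x hb hx F hF hNEB v hvA i₀ hvf h2
    have h4 : uB b w ≤ uB b v := by
      have h5 : (∑ i, -(b i) * w i) ≤ ∑ i, -(b i) * v i := hvge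
      have h6 : (∑ i, b i * v i) ≤ ∑ i, b i * w i := by
        have e1 : (∑ i, -(b i) * w i) = -∑ i, b i * w i := by
          rw [← Finset.sum_neg_distrib]
          exact Finset.sum_congr rfl fun i _ => by ring
        have e2 : (∑ i, -(b i) * v i) = -∑ i, b i * v i := by
          rw [← Finset.sum_neg_distrib]
          exact Finset.sum_congr rfl fun i _ => by ring
        rw [e1, e2] at h5
        linarith
      have e3 : uB b w = (∑ i, b i) - ∑ i, b i * w i := by
        rw [uB, ← Finset.sum_sub_distrib]
        exact Finset.sum_congr rfl fun i _ => by ring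
      have e4 : uB b v = (∑ i, b i) - ∑ i, b i * v i := by
        rw [uB, ← Finset.sum_sub_distrib]
        exact Finset.sum_congr rfl fun i _ => by ring
      rw [e3, e4]
      linarith
    linarith
  rintro ⟨w', hw'A, hA, hB, hs⟩
  set s : ℝ := ∑ i, x i * w' i with hsdef
  have hs0 : 0 ≤ s := Finset.sum_nonneg fun i _ => mul_nonneg (hx.1 i).le (hw'A i).1
  have hs1 : s ≤ 1 := by
    rw [hsdef, ← hx.2]
    exact Finset.sum_le_sum fun i _ => by nlinarith [(hx.1 i).le, (hw'A i).2]
  rcases lt_trichotomy s (1 / 2) with hlt | heq | hgt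
  · -- push Alice's share up to 1/2
    have h1s : 0 < 1 - s := by linarith
    set t : ℝ := (1 / 2 - s) / (1 - s) with htdef
    have ht0 : 0 < t := div_pos (by linarith) h1s
    have ht1 : t ≤ 1 := by rw [htdef, div_le_one h1s]; linarith
    set w'' : Fin m → ℝ := fun i => w' i + t * (1 - w' i) with hw''
    have hw''A : IsAlloc w'' := by
      intro i
      have := hw'A i
      constructor
      · simp only [hw'']
        nlinarith
      · simp only [hw'']
        nlinarith
    have hsum'' : (∑ i, x i * w'' i) = 1 / 2 := by
      have e1 : ∀ i, x i * w'' i = x i * w' i + t * (x i * (1 - w' i)) := fun i => by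
        simp only [hw'']
        ring
      rw [Finset.sum_congr rfl fun i _ => e1 i, Finset.sum_add_distrib, ← Finset.mul_sum,
        sum_mul_one_sub x w' hx.2, ← hsdef, htdef]
      field_simp
      ring
    have hfA := factA w'' hw''A hsum''
    have hexp : uA a w'' = uA a w' + t * (1 - uA a w') := by
      have e1 : ∀ i, a i * w'' i = a i * w' i + t * (a i * (1 - w' i)) := fun i => by
        simp only [hw'']
        ring
      rw [uA, Finset.sum_congr rfl fun i _ => e1 i, Finset.sum_add_distrib, ← Finset.mul_sum,
        sum_mul_one_sub a w' ha.2]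
      rfl
    have hle1 : uA a w' ≤ 1 := by
      rw [uA, ← ha.2]
      exact Finset.sum_le_sum fun i _ => by nlinarith [(ha.1 i).le, (hw'A i).2]
    have h7 : t * (1 - uA a w') ≤ 0 := by
      rw [hexp] at hfA
      linarith
    have h8 : uA a w' = 1 := by nlinarith
    have h9 : (∑ i, a i * (1 - w' i)) = 0 := by
      rw [sum_mul_one_sub a w' ha.2, ← uA, h8]
      ring
    have h10 : ∀ i, w' i = 1 := by
      intro i
      have hz := (Finset.sum_eq_zero_iff_of_nonneg
        (fun i _ => by nlinarith [(ha.1 i).le, (hw'A i).2])).mp h9 i (Finset.mem_univ i)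
      have := ha.1 i
      have : 1 - w' i = 0 := by
        rcases mul_eq_zero.mp hz with h | h
        · exact absurd h (ne_of_gt (ha.1 i))
        · exact h
      linarith
    have : s = 1 := by
      rw [hsdef, ← hx.2]
      exact Finset.sum_congr rfl fun i _ => by rw [h10 i, mul_one]
    linarith
  · have hfA := factA w' hw'A heq
    have hfB := factB w' hw'A heq
    rcases hs with h | h
    · linarith
    · linarith
  · -- scale Bob's complaint: shrink w'
    have hspos : 0 < s := by linarith
    set t : ℝ := 1 / (2 * s) with htdef
    have ht0 : 0 < t := by positivity
    have ht1 : t < 1 := by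
      rw [htdef, div_lt_one (by linarith)]
      linarith
    set w'' : Fin m → ℝ := fun i => t * w' i with hw''
    have hw''A : IsAlloc w'' := by
      intro i
      have := hw'A i
      constructor
      · simp only [hw'']
        exact mul_nonneg ht0.le this.1
      · simp only [hw'']
        nlinarith
    have hsum'' : (∑ i, x i * w'' i) = 1 / 2 := by
      have e1 : ∀ i, x i * w'' i = t * (x i * w' i) := fun i => by
        simp only [hw'']
        ring
      rw [Finset.sum_congr rfl fun i _ => e1 i, ← Finset.mul_sum, ← hsdef, htdef]
      field_simp
    have hfB := factB w'' hw''A hsum''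
    have hexp : uB b w'' = uB b w' + (1 - t) * ∑ i, b i * w' i := by
      have e1 : ∀ i ∈ Finset.univ, b i * (1 - w'' i) = b i * (1 - w' i) + (1 - t) * (b i * w' i) := by
        intro i _
        simp only [hw'']
        ring
      have e2 : (∑ i, b i * (1 - w'' i)) = ∑ i, (b i * (1 - w' i) + (1 - t) * (b i * w' i)) :=
        Finset.sum_congr rfl e1
      rw [uB, uB, e2, Finset.sum_add_distrib, ← Finset.mul_sum]
    have hbw0 : 0 ≤ ∑ i, b i * w' i :=
      Finset.sum_nonneg fun i _ => mul_nonneg (hb.1 i).le (hw'A i).1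
    have h7 : (1 - t) * ∑ i, b i * w' i ≤ 0 := by
      rw [hexp] at hfB
      linarith
    have h1t : 0 < 1 - t := by linarith
    have h8 : (∑ i, b i * w' i) = 0 := by
      have h9 : (1 - t) * (∑ i, b i * w' i) ≤ (1 - t) * 0 := by rw [mul_zero]; exact h7
      have h11 := le_of_mul_le_mul_left h9 h1t
      linarith
    have h10 : ∀ i, w' i = 0 := by
      intro i
      have hz := (Finset.sum_eq_zero_iff_of_nonneg
        (fun i _ => mul_nonneg (hb.1 i).le (hw'A i).1)).mp h8 i (Finset.mem_univ i)
      rcases mul_eq_zero.mp hz with h | h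
      · exact absurd h (ne_of_gt (hb.1 i))
      · exact h
    have : s = 0 := by
      rw [hsdef]
      exact Finset.sum_eq_zero fun i _ => by rw [h10 i, mul_zero]
    linarith
end

section
/- Consider the continuous Adjusted Winner game with informed tie-breaking and selection function F. If a profile (x, x), in which both players submit the same report x, is a pure Nash equilibrium with respect to the true valuations (a, b), then F(x, x) also maximizes Alice's true utility among all tie-breaking outcomes: u_a(F(x, x)) ≥ u_a(w) for every allocation w that is ordered and equitable with respect to the reports (x, x). -/
open Finset

lemma step_le {m : ℕ} {l l' : Fin m} {lam mu : ℝ} {u v : Fin m → ℝ}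
    (hlam1 : lam ≤ 1) (hmu0 : 0 ≤ mu)
    (hu1 : ∀ i, i < l → u i = 1) (hul : u l = lam) (hu0 : ∀ i, l < i → u i = 0)
    (hv1 : ∀ i, i < l' → v i = 1) (hvl : v l' = mu) (hv0 : ∀ i, l' < i → v i = 0)
    (h : l < l' ∨ (l = l' ∧ lam ≤ mu)) : ∀ i, u i ≤ v i := by
  intro i
  rcases lt_trichotomy i l with hi | hi | hi
  · rw [hu1 i hi]
    have : i < l' := by rcases h with h | ⟨h, _⟩; exact hi.trans h; exact h ▸ hi
    rw [hv1 i this]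
  · subst hi
    rw [hul]
    rcases h with h | ⟨h, hc⟩
    · rw [hv1 i h]; exact hlam1
    · rw [h, hvl]; exact hc
  · rw [hu0 i hi]
    rcases lt_trichotomy i l' with hj | hj | hj
    · rw [hv1 i hj]; norm_num
    · subst hj; rw [hvl]; exact hmu0
    · rw [hv0 i hj]

lemma step_comparable {m : ℕ} {l l' : Fin m} {lam mu : ℝ} {u v : Fin m → ℝ}
    (hlam0 : 0 ≤ lam) (hlam1 : lam ≤ 1) (hmu0 : 0 ≤ mu) (hmu1 : mu ≤ 1)
    (hu1 : ∀ i, i < l → u i = 1) (hul : u l = lam) (hu0 : ∀ i, l < i → u i = 0)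
    (hv1 : ∀ i, i < l' → v i = 1) (hvl : v l' = mu) (hv0 : ∀ i, l' < i → v i = 0) :
    (∀ i, u i ≤ v i) ∨ (∀ i, v i ≤ u i) := by
  rcases lt_trichotomy l l' with h | h | h
  · exact Or.inl (step_le hlam1 hmu0 hu1 hul hu0 hv1 hvl hv0 (Or.inl h))
  · rcases le_total lam mu with hc | hc
    · exact Or.inl (step_le hlam1 hmu0 hu1 hul hu0 hv1 hvl hv0 (Or.inr ⟨h, hc⟩))
    · exact Or.inr (step_le hmu1 hlam0 hv1 hvl hv0 hu1 hul hu0 (Or.inr ⟨h.symm, hc⟩))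
  · exact Or.inr (step_le hmu1 hlam0 hv1 hvl hv0 hu1 hul hu0 (Or.inl h))

lemma perm_eq_of_anti {m : ℕ} {r : Fin m → ℝ} {π σ : Equiv.Perm (Fin m)}
    (hπ : ∀ i j : Fin m, i < j → r (π j) < r (π i))
    (hσ : ∀ i j : Fin m, i < j → r (σ j) ≤ r (σ i)) : ∀ i, σ i = π i := by
  have hmono : Monotone (fun i => π.symm (σ i)) := by
    intro i j hij
    rcases eq_or_lt_of_le hij with h | h
    · exact le_of_eq (by rw [h])
    · by_contra hcon
      push_neg at hcon
      have h2 := hπ _ _ hcon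
      rw [Equiv.apply_symm_apply, Equiv.apply_symm_apply] at h2
      exact absurd (hσ i j h) (not_le.mpr h2)
  have hinj : Function.Injective (fun i => π.symm (σ i)) :=
    π.symm.injective.comp σ.injective
  have hsm : StrictMono (fun i => π.symm (σ i)) := hmono.strictMono_of_injective hinj
  have hrange : Set.range (fun i => π.symm (σ i)) = Set.range (id : Fin m → Fin m) := by
    rw [Set.range_id]
    exact (σ.trans π.symm).surjective.range_eq
  haveI : WellFoundedLT (Fin m) := inferInstance
  have hid : (fun i => π.symm (σ i)) = (id : Fin m → Fin m) :=
    (hsm.range_inj (strictMono_id (α := Fin m))).1 hrange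
  intro i
  have h3 : π.symm (σ i) = i := congrFun hid i
  have h4 := congrArg π h3
  rwa [Equiv.apply_symm_apply] at h4

/-- in the continuous Adjusted Winner game with informed
tie-breaking, if a symmetric profile `(x, x)` is a pure Nash equilibrium with
respect to the true valuations `(a, b)`, then `F x x` also maximizes Alice's
true utility among all report-ordered, report-equitable allocations. -/
theorem informed_symmetric_nash_maximizes_alice (m : ℕ) (hm : 1 ≤ m)
    (a b x : Fin m → ℝ) (ha : IsValuation a) (hb : IsValuation b)
    (hx : IsValuation x)
    (F : (Fin m → ℝ) → (Fin m → ℝ) → (Fin m → ℝ))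
    (hF : IsInformedSelection b F)
    (hNEA : ∀ x' : Fin m → ℝ, IsValuation x' → uA a (F x' x) ≤ uA a (F x x))
    (hNEB : ∀ y' : Fin m → ℝ, IsValuation y' → uB b (F x y') ≤ uB b (F x x)) :
    ∀ w : Fin m → ℝ, IsAlloc w → Ordered x x w → EquitableRep x x w →
      uA a w ≤ uA a (F x x) := by
  intro w hw hOrdw hEqw
  obtain ⟨π, -, l, lam, hlam0, hlam1, hw1, hwl, hw0⟩ := hOrdw
  haveI : Nonempty (Fin m) := ⟨⟨0, hm⟩⟩
  obtain ⟨j₀, -, hj₀⟩ := Finset.exists_min_image Finset.univ x Finset.univ_nonempty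
  set c := x j₀ with hc_def
  clear_value c
  have hc : 0 < c := by rw [hc_def]; exact hx.1 j₀
  have hcle : ∀ j, c ≤ x j := fun j => hj₀ j (Finset.mem_univ j)
  have hm0 : (0:ℝ) < m := by exact_mod_cast Nat.lt_of_lt_of_le Nat.zero_lt_one hm
  -- ∑ x w = 1/2
  have hxw : ∑ j, x j * w j + ∑ j, x j * w j = 1 := by
    have h2 := hEqw
    simp only [EquitableRep, mul_one_sub] at h2
    rw [Finset.sum_sub_distrib] at h2
    linarith [hx.2]
  apply le_of_forall_sub_le
  intro δ hδ
  set ε := δ * c / m with hε_def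
  clear_value ε
  have hε : 0 < ε := by rw [hε_def]; positivity
  -- the perturbed report
  set t : Fin m → ℝ := fun j => (m : ℝ) - ((π.symm j : ℕ) : ℝ) with ht_def
  clear_value t
  have ht_pos : ∀ j, 0 < t j := by
    intro j
    have h1 : ((π.symm j : ℕ) : ℝ) < m := by exact_mod_cast (π.symm j).is_lt
    simp only [ht_def]; linarith
  have ht_le : ∀ j, t j ≤ m := by
    intro j
    have h1 : (0:ℝ) ≤ ((π.symm j : ℕ) : ℝ) := Nat.cast_nonneg _
    simp only [ht_def]; linarith
  have ht_anti : ∀ i j : Fin m, i < j → t (π j) < t (π i) := by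
    intro i j hij
    have h1 : ((i:ℕ):ℝ) < ((j:ℕ):ℝ) := by exact_mod_cast hij
    simp only [ht_def, Equiv.symm_apply_apply]
    linarith
  set T := ∑ j, x j * t j with hT_def
  clear_value T
  have hT : 0 ≤ T := by
    rw [hT_def]
    exact Finset.sum_nonneg fun j _ => le_of_lt (mul_pos (hx.1 j) (ht_pos j))
  set Z := 1 + ε * T with hZ_def
  clear_value Z
  have hZ1 : (1:ℝ) ≤ Z := by rw [hZ_def]; nlinarith
  have hZ : (0:ℝ) < Z := by linarith
  set r : Fin m → ℝ := fun j => (1 + ε * t j) / Z with hr_def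
  clear_value r
  have hr_pos : ∀ j, 0 < r j := by
    intro j
    rw [hr_def]
    exact div_pos (by nlinarith [ht_pos j]) hZ
  set x' : Fin m → ℝ := fun j => x j * r j with hx'_def
  clear_value x'
  have hx' : IsValuation x' := by
    constructor
    · intro j; rw [hx'_def]; exact mul_pos (hx.1 j) (hr_pos j)
    · have h1 : ∑ j, x' j = (∑ j, x j * (1 + ε * t j)) / Z := by
        rw [Finset.sum_div]
        exact Finset.sum_congr rfl fun j _ => by rw [hx'_def, hr_def, mul_div_assoc]
      have h2 : ∑ j, x j * (1 + ε * t j) = Z := by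
        have h3 : ∀ j : Fin m, x j * (1 + ε * t j) = x j + ε * (x j * t j) := fun j => by ring
        simp only [h3]
        rw [Finset.sum_add_distrib, hx.2, ← Finset.mul_sum, hZ_def, hT_def]
      rw [h1, h2, div_self (ne_of_gt hZ)]
  obtain ⟨hFalloc, hFord, hFeq, -⟩ := hF x' x hx' hx
  set Fx := F x' x with hFx_def
  clear_value Fx
  obtain ⟨σ, hσr, l', mu, hmu0, hmu1, hv1, hvl, hv0⟩ := hFord
  -- σ = π
  have hπr : ∀ i j : Fin m, i < j → r (π j) < r (π i) := by
    intro i j hij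
    rw [hr_def]
    apply div_lt_div_of_pos_right ?_ hZ
    nlinarith [ht_anti i j hij]
  have hσr' : ∀ i j : Fin m, i < j → r (σ j) ≤ r (σ i) := by
    intro i j hij
    have h1 := hσr i j hij
    have hxi := hx.1 (σ i)
    have hxj := hx.1 (σ j)
    simp only [hx'_def] at h1
    nlinarith [h1, mul_pos hxi hxj]
  have hσπ : ∀ i, σ i = π i := perm_eq_of_anti hπr hσr'
  -- Fx is a step along π
  have hv1' : ∀ i, i < l' → Fx (π i) = 1 := fun i hi => by rw [← hσπ i]; exact hv1 i hi
  have hvl' : Fx (π l') = mu := by rw [← hσπ l']; exact hvl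
  have hv0' : ∀ i, l' < i → Fx (π i) = 0 := fun i hi => by rw [← hσπ i]; exact hv0 i hi
  -- comparability
  have hcomp : (∀ j, w j ≤ Fx j) ∨ (∀ j, Fx j ≤ w j) := by
    rcases step_comparable hlam0 hlam1 hmu0 hmu1 hw1 hwl hw0 hv1' hvl' hv0' with h | h
    · left; intro j; have h2 := h (π.symm j); rwa [Equiv.apply_symm_apply] at h2
    · right; intro j; have h2 := h (π.symm j); rwa [Equiv.apply_symm_apply] at h2
  have hNash := hNEA x' hx'
  rcases hcomp with hcase | hcase
  · -- Alice weakly prefers Fx to w pointwise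
    have h1 : uA a w ≤ uA a Fx := by
      unfold uA
      exact Finset.sum_le_sum fun j _ => mul_le_mul_of_nonneg_left (hcase j) (ha.1 j).le
    rw [hFx_def] at h1
    linarith
  · -- Fx ≤ w pointwise; use equitability to bound the gap
    have hS1 : ∑ j, x' j * Fx j + ∑ j, x j * Fx j = 1 := by
      have h2 := hFeq
      simp only [EquitableRep, mul_one_sub] at h2
      rw [Finset.sum_sub_distrib] at h2
      linarith [hx.2]
    have hterm : ∀ j : Fin m, (x' j - x j) * w j ≤ ε * (m : ℝ) * x j := by
      intro j
      have h1 : x' j - x j = x j * (ε * (t j - T) / Z) := by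
        rw [hx'_def, hr_def]
        field_simp
        rw [hZ_def]
        ring
      have h2 : ε * (t j - T) / Z ≤ ε * m := by
        rcases le_or_gt 0 (ε * (t j - T)) with hnn | hneg
        · calc ε * (t j - T) / Z ≤ ε * (t j - T) := div_le_self hnn hZ1
            _ ≤ ε * m := by nlinarith [ht_le j, hT]
        · have h3 : ε * (t j - T) / Z < 0 := div_neg_of_neg_of_pos hneg hZ
          nlinarith
      rw [h1]
      rcases le_or_gt 0 (ε * (t j - T) / Z) with hq | hq
      · calc x j * (ε * (t j - T) / Z) * w j
            ≤ x j * (ε * (t j - T) / Z) * 1 :=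
              mul_le_mul_of_nonneg_left (hw j).2 (mul_nonneg (hx.1 j).le hq)
          _ = x j * (ε * (t j - T) / Z) := mul_one _
          _ ≤ x j * (ε * m) := mul_le_mul_of_nonneg_left h2 (hx.1 j).le
          _ = ε * (m : ℝ) * x j := by ring
      · have hle : x j * (ε * (t j - T) / Z) * w j ≤ 0 :=
          mul_nonpos_of_nonpos_of_nonneg
            (mul_nonpos_of_nonneg_of_nonpos (hx.1 j).le hq.le) (hw j).1
        have : (0:ℝ) ≤ ε * (m : ℝ) * x j :=
          le_of_lt (mul_pos (mul_pos hε hm0) (hx.1 j))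
        linarith
    have hS3 : ∑ j, x' j * w j - ∑ j, x j * w j ≤ ε * m := by
      have h1 : ∑ j, (x' j - x j) * w j ≤ ∑ j, ε * (m : ℝ) * x j :=
        Finset.sum_le_sum fun j _ => hterm j
      simp only [sub_mul] at h1
      rw [Finset.sum_sub_distrib, ← Finset.mul_sum, hx.2, mul_one] at h1
      linarith
    have hpt : ∀ j : Fin m, c * (a j * w j) - c * (a j * Fx j) ≤
        (x' j * w j + x j * w j) - (x' j * Fx j + x j * Fx j) := by
      intro j
      have hd : 0 ≤ w j - Fx j := sub_nonneg.mpr (hcase j)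
      have ha1 : a j ≤ 1 := by
        have h2 := Finset.single_le_sum (f := a) (fun i _ => (ha.1 i).le) (Finset.mem_univ j)
        rw [ha.2] at h2
        exact h2
      have e1 : a j * (w j - Fx j) ≤ w j - Fx j := mul_le_of_le_one_left hd ha1
      have e2 : c * (w j - Fx j) ≤ x j * (w j - Fx j) :=
        mul_le_mul_of_nonneg_right (hcle j) hd
      have e3 : 0 ≤ x' j * (w j - Fx j) := mul_nonneg (hx'.1 j).le hd
      have e4 : c * (a j * (w j - Fx j)) ≤ c * (w j - Fx j) :=
        mul_le_mul_of_nonneg_left e1 hc.le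
      have eL : c * (a j * w j) - c * (a j * Fx j) = c * (a j * (w j - Fx j)) := by ring
      have eR : (x' j * w j + x j * w j) - (x' j * Fx j + x j * Fx j) =
          x' j * (w j - Fx j) + x j * (w j - Fx j) := by ring
      rw [eL, eR]
      linarith [e2, e3, e4]
    have hS4 : c * uA a w - c * uA a Fx ≤ ε * m := by
      have h1 := Finset.sum_le_sum fun j (_ : j ∈ Finset.univ) => hpt j
      have hL : ∑ j, (c * (a j * w j) - c * (a j * Fx j)) =
          c * (∑ j, a j * w j) - c * (∑ j, a j * Fx j) := by
        rw [Finset.sum_sub_distrib, Finset.mul_sum, Finset.mul_sum]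
      have hR : ∑ j, ((x' j * w j + x j * w j) - (x' j * Fx j + x j * Fx j)) =
          (∑ j, x' j * w j + ∑ j, x j * w j) - (∑ j, x' j * Fx j + ∑ j, x j * Fx j) := by
        rw [Finset.sum_sub_distrib, Finset.sum_add_distrib, Finset.sum_add_distrib]
      rw [hL, hR] at h1
      unfold uA
      linarith [hS1, hxw, hS3]
    have hεm : ε * m = δ * c := by
      rw [hε_def]
      field_simp
    rw [hεm] at hS4
    have hd2 : c * (uA a w - δ) ≤ c * uA a Fx := by
      have e : c * (uA a w - δ) = c * uA a w - δ * c := by ring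
      rw [e]
      linarith [hS4]
    have hfin : uA a w - δ ≤ uA a Fx := le_of_mul_le_mul_left hd2 hc
    rw [hFx_def] at hfin
    linarith
end
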